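/- arXiv:1602.01860 — 4 statements merged into one kernel-verified Lean document; each statement's English description precedes it below -/
import Mathlib

section
/- Suppose the ESP data satisfies Assumption (B). Then there exists a constant κ ∈ (0,∞) such that whenever (Z₁,Y₁) solves the ESP for a continuous X₁ : [0,∞) → ℝ^J and (Z₂,Y₂) solves the ESP for a continuous X₂ : [0,∞) → ℝ^J, one has ‖Z₁ − Z₂‖_T ≤ κ‖X₁ − X₂‖_T for every T ∈ [0,∞). -/
open scoped RealInnerProductSpace ENNReal NNReal
open Filter Topology Set MeasureTheory

noncomputable section

abbrev EucSp (J : ℕ) : Type := EuclideanSpace ℝ (Fin J)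

/-- The convex cone generated by a set of vectors (by convention `coneGen ∅ = {0}`). -/
def coneGen {J : ℕ} (s : Set (EucSp J)) : Set (EucSp J) :=
  { y | ∃ (k : ℕ) (r : Fin k → ℝ) (v : Fin k → EucSp J),
      (∀ i, 0 ≤ r i) ∧ (∀ i, v i ∈ s) ∧ y = ∑ i, r i • v i }

/-- The polyhedral domain `G`. -/
def Gset {J N : ℕ} (n : Fin N → EucSp J) (c : Fin N → ℝ) : Set (EucSp J) :=
  { x | ∀ i, c i ≤ ⟪x, n i⟫ }

/-- The active index set `I(x)`. -/
def ISet {J N : ℕ} (n : Fin N → EucSp J) (c : Fin N → ℝ) (x : EucSp J) : Set (Fin N) :=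
  { i | ⟪x, n i⟫ = c i }

/-- The cone `d(x)` of admissible reflection directions at `x`. -/
def dCone {J N : ℕ} (n : Fin N → EucSp J) (c : Fin N → ℝ) (d : Fin N → EucSp J)
    (x : EucSp J) : Set (EucSp J) :=
  coneGen (d '' ISet n c x)

/-- `(Z, Y)` solves the extended Skorokhod problem for `X`. -/
def SolvesESP {J N : ℕ} (n : Fin N → EucSp J) (c : Fin N → ℝ) (d : Fin N → EucSp J)
    (X Z Y : ℝ → EucSp J) : Prop :=
  ContinuousOn Z (Ici 0) ∧ ContinuousOn Y (Ici 0) ∧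
  Y 0 ∈ dCone n c d (Z 0) ∧
  (∀ t ∈ Ici (0:ℝ), Z t = X t + Y t) ∧
  (∀ t ∈ Ici (0:ℝ), Z t ∈ Gset n c) ∧
  (∀ s t : ℝ, 0 ≤ s → s < t →
    Y t - Y s ∈ coneGen (⋃ u ∈ Ioc s t, dCone n c d (Z u)))

/-- Assumption (B). -/
def AssumptionB {J N : ℕ} (n d : Fin N → EucSp J) : Prop :=
  ∃ δ : ℝ, 0 < δ ∧ ∃ B : Set (EucSp J),
    IsCompact B ∧ Convex ℝ B ∧ (∀ z ∈ B, -z ∈ B) ∧ (0 : EucSp J) ∈ interior B ∧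
    ∀ i : Fin N, ∀ z ∈ frontier B, |⟪z, n i⟫| < δ →
      ∀ ν : EucSp J, ‖ν‖ = 1 → (∀ y ∈ B, 0 ≤ ⟪ν, y - z⟫) → ⟪ν, d i⟫ = 0

/-- Assumption (π). -/
def AssumptionPi {J N : ℕ} (n : Fin N → EucSp J) (c : Fin N → ℝ) (d : Fin N → EucSp J)
    (proj : EucSp J → EucSp J) : Prop :=
  (∀ x, proj x ∈ Gset n c) ∧ (∀ x ∈ Gset n c, proj x = x) ∧
  (∀ x, x ∉ Gset n c → proj x - x ∈ dCone n c d (proj x))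

/-- The supremum norm `‖f‖_T` of `f` over `[0, T]`. -/
def supNorm {J : ℕ} (f : ℝ → EucSp J) (T : ℝ) : ℝ :=
  ⨆ s : Icc (0:ℝ) T, ‖f s.1‖

/-- The subspace (as a set) `H_x`. -/
def Hset {J N : ℕ} (n : Fin N → EucSp J) (c : Fin N → ℝ) (x : EucSp J) : Set (EucSp J) :=
  { y | ∀ i ∈ ISet n c x, ⟪y, n i⟫ = 0 }

/-- The smooth part `S` of the boundary. -/
def Sstar {J N : ℕ} (n : Fin N → EucSp J) (c : Fin N → ℝ) : Set (EucSp J) :=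
  { x ∈ frontier (Gset n c) | (ISet n c x).ncard = 1 }

/-- The nonsmooth part `N` of the boundary. -/
def Nstar {J N : ℕ} (n : Fin N → EucSp J) (c : Fin N → ℝ) : Set (EucSp J) :=
  { x ∈ frontier (Gset n c) | 2 ≤ (ISet n c x).ncard }

/-- The set `W`. -/
def Wstar {J N : ℕ} (n : Fin N → EucSp J) (c : Fin N → ℝ) (d : Fin N → EucSp J) :
    Set (EucSp J) :=
  { x ∈ Nstar n c | Submodule.span ℝ (Hset n c x ∪ dCone n c d x) ≠ ⊤ }

/-- The boundary jitter property on `[0, T)`. -/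
def Jitter {J N : ℕ} (n : Fin N → EucSp J) (c : Fin N → ℝ) (Z Y : ℝ → EucSp J)
    (T : ℝ≥0∞) : Prop :=
  (∀ t : ℝ, 0 ≤ t → ENNReal.ofReal t < T → Z t ∈ Sstar n c →
    ∀ s u : ℝ, s < t → t < u → ENNReal.ofReal u < T →
      ∃ a ∈ Ioo (max s 0) u, ∃ b ∈ Ioo (max s 0) u, Y a ≠ Y b) ∧
  (volume {t : ℝ | 0 ≤ t ∧ ENNReal.ofReal t < T ∧ Z t ∈ Nstar n c} = 0) ∧
  (Z 0 ∈ Nstar n c →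
    ∀ i ∈ ISet n c (Z 0), ∀ δ : ℝ, 0 < δ → ENNReal.ofReal δ < T →
      ∃ u ∈ Ioo (0:ℝ) δ, ISet n c (Z u) = {i}) ∧
  (∀ t : ℝ, 0 < t → ENNReal.ofReal t < T → Z t ∈ Nstar n c →
    ∀ i ∈ ISet n c (Z t), ∀ δ : ℝ, 0 < δ → δ < t →
      ∃ s ∈ Ioo (t - δ) t, ISet n c (Z s) = {i})

/-- `f` is right-continuous with finite left limits on `[0, T)`. -/
def DrOn {J : ℕ} (f : ℝ → EucSp J) (T : ℝ≥0∞) : Prop :=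
  (∀ t : ℝ, 0 ≤ t → ENNReal.ofReal t < T → Tendsto f (𝓝[>] t) (𝓝 (f t))) ∧
  (∀ t : ℝ, 0 < t → ENNReal.ofReal t < T → ∃ L, Tendsto f (𝓝[<] t) (𝓝 L))

/-- `f ∈ D_{ℓ,r}([0,T))`. -/
def DlrOn {J : ℕ} (f : ℝ → EucSp J) (T : ℝ≥0∞) : Prop :=
  (∀ t : ℝ, 0 < t → ENNReal.ofReal t < T → ∃ L, Tendsto f (𝓝[<] t) (𝓝 L)) ∧
  (∀ t : ℝ, 0 ≤ t → ENNReal.ofReal t < T → ∃ L, Tendsto f (𝓝[>] t) (𝓝 L)) ∧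
  (∀ t : ℝ, 0 < t → ENNReal.ofReal t < T →
    Tendsto f (𝓝[<] t) (𝓝 (f t)) ∨ Tendsto f (𝓝[>] t) (𝓝 (f t)))

/-- `(φ, η)` solves the derivative problem associated with `Z` for `ψ` on `[0, T)`. -/
def SolvesDPOn {J N : ℕ} (n : Fin N → EucSp J) (c : Fin N → ℝ) (d : Fin N → EucSp J)
    (Z ψ φ η : ℝ → EucSp J) (T : ℝ≥0∞) : Prop :=
  DrOn φ T ∧ DrOn η T ∧
  η 0 ∈ Submodule.span ℝ (dCone n c d (Z 0)) ∧
  (∀ t : ℝ, 0 ≤ t → ENNReal.ofReal t < T →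
    φ t = ψ t + η t ∧ φ t ∈ Hset n c (Z t)) ∧
  (∀ s t : ℝ, 0 ≤ s → s < t → ENNReal.ofReal t < T →
    η t - η s ∈ Submodule.span ℝ (⋃ u ∈ Ioc s t, dCone n c d (Z u)))

/-- Decomposition `Y = R L` where the components of `L` are nondecreasing and can
increase only when `Z` is on the corresponding face. -/
def LocalTimeProps {J N : ℕ} (n : Fin N → EucSp J) (c : Fin N → ℝ) (d : Fin N → EucSp J)
    (Z Y : ℝ → EucSp J) (L : ℝ → EucSp N) : Prop :=
  ContinuousOn L (Ici 0) ∧ L 0 = 0 ∧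
  (∀ t ∈ Ici (0:ℝ), ∀ i, 0 ≤ L t i) ∧
  (∀ i, MonotoneOn (fun t => L t i) (Ici 0)) ∧
  (∀ t ∈ Ici (0:ℝ), Y t = ∑ i, L t i • d i) ∧
  (∀ i : Fin N, ∀ s t : ℝ, 0 ≤ s → s ≤ t →
    (∀ u ∈ Icc s t, Z u ∉ {x ∈ frontier (Gset n c) | ⟪x, n i⟫ = c i}) →
    L s i = L t i)

/-- The dual set `B*`. -/
def dualSet {J : ℕ} (B : Set (EucSp J)) : Set (EucSp J) :=
  { y | ∀ z ∈ B, ⟪y, z⟫ ≤ 1 }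

/-- `frontComp Ls k y = Ls 0 (Ls 1 (⋯ (Ls (k-1) y)))`. -/
def frontComp {J : ℕ} (Ls : ℕ → (EucSp J → EucSp J)) : ℕ → EucSp J → EucSp J
  | 0, y => y
  | (k+1), y => frontComp Ls k (Ls k y)

/-- `backComp Ls k y = Ls (k-1) (⋯ (Ls 0 y))`. -/
def backComp {J : ℕ} (Ls : ℕ → (EucSp J → EucSp J)) : ℕ → EucSp J → EucSp J
  | 0, y => y
  | (k+1), y => Ls k (backComp Ls k y)

/-!
Let `ρ = gauge B` and `v = Y₁ - Y₂`. A support functional `ξ` of `ρ` at `v b` is an outward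
normal of `B` at the boundary point `z = v b / ρ (v b)`. When face `i` is active for `Z₁` at a
time `u`, `⟪Z₁ u - Z₂ u, n i⟫ ≤ 0`, so `⟪v b, n i⟫` is at most `‖X₁ - X₂‖_T` plus the oscillation
of `v` between `u` and `b`; once `δ ρ (v b)` exceeds this, `⟪z, n i⟫ < δ`. Assumption (B) makes
`∂B` flat in direction `d i` inside the slab `|⟪·, n i⟫| < δ`, and rotating the normal from `ξ`
towards `n i` (a connectedness argument) then forces `⟪ξ, d i⟫ ≤ 0`. Symmetrically
`⟪ξ, d i⟫ ≥ 0` on faces active for `Z₂`, so the pushes of `Y₁` and `Y₂` near `b` cannot increase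
`⟪ξ, v⟫`: `ρ ∘ v` does not grow while `δ ρ ∘ v` exceeds `‖X₁ - X₂‖_T`, and it starts below that
level. Hence `δ ρ (Y₁ - Y₂) ≤ ‖X₁ - X₂‖_T`, and `Z₁ - Z₂ = (X₁ - X₂) + (Y₁ - Y₂)` gives
`κ = 1 + R / δ` for `B ⊆ closedBall 0 R`.
-/

section SupportPoints

variable {E : Type*} [NormedAddCommGroup E] [InnerProductSpace ℝ E]

def NormalsOrthogonalOnSlab (B : Set E) (n d : E) (δ : ℝ) : Prop :=
  ∀ z ∈ frontier B, |⟪z, n⟫| < δ →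
    ∀ ν : E, ‖ν‖ = 1 → (∀ y ∈ B, 0 ≤ ⟪ν, y - z⟫) → ⟪ν, d⟫ = 0

structure IsSymmetricConvexBody (B : Set E) : Prop where
  isCompact : IsCompact B
  convex : Convex ℝ B
  neg_mem : ∀ z ∈ B, -z ∈ B
  mem_nhds_zero : B ∈ 𝓝 0

lemma IsMaxOn.mem_frontier_of_inner {B : Set E} {ξ y : E} (hξ : ξ ≠ 0) (hy : y ∈ B)
    (hmax : IsMaxOn (fun y' => ⟪ξ, y'⟫) B y) : y ∈ frontier B := by
  refine ⟨subset_closure hy, fun hint => hξ ?_⟩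
  have h := (hmax.isLocalMax (mem_interior_iff_mem_nhds.mp hint)).hasFDerivAt_eq_zero
    (innerSL ℝ ξ).hasFDerivAt
  simpa using congr($h ξ)

lemma IsCompact.isClosed_setOf_exists_isMaxOn {X : Type*} [TopologicalSpace X] {K : Set E}
    (hK : IsCompact K) (B : Set E) {p : X → E} (hp : Continuous p) :
    IsClosed {x | ∃ y ∈ K, IsMaxOn (fun y' => ⟪p x, y'⟫) B y} := by
  have : CompactSpace K := isCompact_iff_compactSpace.mp hK
  have hcl : IsClosed {q : X × K | ∀ y' ∈ B, ⟪p q.1, y'⟫ ≤ ⟪p q.1, q.2⟫} := by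
    simp only [ofPred_forall]
    exact isClosed_biInter fun y' _ => isClosed_le (by fun_prop) (by fun_prop)
  convert isClosedMap_fst_of_compactSpace _ hcl using 1
  ext x
  simp [isMaxOn_iff]

namespace NormalsOrthogonalOnSlab

variable {B : Set E} {n d : E} {δ : ℝ}

lemma inner_eq_zero (hB : NormalsOrthogonalOnSlab B n d δ) {ξ y : E} (hy : y ∈ B)
    (hmax : IsMaxOn (fun y' => ⟪ξ, y'⟫) B y) (hyn : |⟪y, n⟫| < δ) : ⟪ξ, d⟫ = 0 := by
  rcases eq_or_ne ξ 0 with rfl | hξ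
  · exact inner_zero_left _
  have hξ' : 0 < ‖ξ‖ := norm_pos_iff.mpr hξ
  have hinward : ∀ y' ∈ B, 0 ≤ ⟪-(‖ξ‖⁻¹ • ξ), y' - y⟫ := fun y' hy' => by
    rw [inner_neg_left, real_inner_smul_left, inner_sub_right, neg_nonneg]
    exact mul_nonpos_of_nonneg_of_nonpos (inv_nonneg.2 hξ'.le) (sub_nonpos.2 (hmax hy'))
  have h := hB y (hmax.mem_frontier_of_inner hξ hy) hyn _ (by simp [norm_smul, hξ'.ne']) hinward
  simpa [inner_neg_left, real_inner_smul_left, hξ] using h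

lemma inner_eq_zero_of_isMaxOn_of_isMaxOn (hB : NormalsOrthogonalOnSlab B n d δ)
    (hconv : Convex ℝ B) (hδ : 0 < δ) {ξ y₁ y₂ : E} (hy₁ : y₁ ∈ B) (hy₂ : y₂ ∈ B)
    (hmax₁ : IsMaxOn (fun y' => ⟪ξ, y'⟫) B y₁) (hmax₂ : IsMaxOn (fun y' => ⟪ξ, y'⟫) B y₂)
    (hn₁ : ⟪y₁, n⟫ ≤ 0) (hn₂ : 0 ≤ ⟪y₂, n⟫) : ⟪ξ, d⟫ = 0 := by
  obtain ⟨y, hy, hyn⟩ := (convex_segment y₁ y₂).isPreconnected.intermediate_value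
    (left_mem_segment ℝ y₁ y₂) (right_mem_segment ℝ y₁ y₂)
    (continuous_id.inner continuous_const).continuousOn ⟨hn₁, hn₂⟩
  have hyn : ⟪y, n⟫ = 0 := hyn
  refine hB.inner_eq_zero (hconv.segment_subset hy₁ hy₂ hy) ?_ (by simpa [hyn] using hδ)
  obtain ⟨a, b, ha, hb, hab, rfl⟩ := hy
  intro y' hy'
  have h₁ : ⟪ξ, y'⟫ ≤ ⟪ξ, y₁⟫ := hmax₁ hy'
  have h₂ : ⟪ξ, y'⟫ ≤ ⟪ξ, y₂⟫ := hmax₂ hy'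
  simp only [mem_ofPred_eq, inner_add_right, real_inner_smul_right]
  have h : ⟪ξ, y'⟫ = a * ⟪ξ, y'⟫ + b * ⟪ξ, y'⟫ := by rw [← add_mul, hab, one_mul]
  linarith [mul_le_mul_of_nonneg_left h₁ ha, mul_le_mul_of_nonneg_left h₂ hb]

theorem inner_nonpos_of_isMaxOn (hB : NormalsOrthogonalOnSlab B n d δ) (hc : IsCompact B)
    (hconv : Convex ℝ B) (hsymm : ∀ z ∈ B, -z ∈ B) (hδ : 0 < δ) (hdn : 0 < ⟪d, n⟫)
    {ξ z : E} (hz : z ∈ B) (hmax : IsMaxOn (fun y => ⟪ξ, y⟫) B z) (hzn : ⟪z, n⟫ < δ) :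
    ⟪ξ, d⟫ ≤ 0 := by
  by_contra! hξd
  rcases lt_or_ge 0 ⟪z, n⟫ with hpos | hnonpos
  · exact hξd.ne' (hB.inner_eq_zero hz hmax (abs_lt.mpr ⟨by linarith, hzn⟩))
  -- Move the functional from `ξ` to `n`: its support points jump from `⟪·, n⟫ ≤ 0` to
  -- `⟪·, n⟫ ≥ 0`, so at some moment both kinds occur, which the slab condition forbids.
  set p : ℝ → E := fun θ => (1 - θ) • ξ + θ • n
  have hpd : ∀ θ ∈ Icc (0:ℝ) 1, 0 < ⟪p θ, d⟫ := fun θ hθ => by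
    rw [real_inner_comm] at hdn
    simp only [p, inner_add_left, real_inner_smul_left]
    rcases hθ.2.lt_or_eq with h | rfl
    · nlinarith [mul_pos (sub_pos.2 h) hξd, mul_nonneg hθ.1 hdn.le]
    · simpa using hdn
  set S : Set ℝ → Set ℝ :=
    fun s => {θ | ∃ y ∈ B ∩ {y | ⟪y, n⟫ ∈ s}, IsMaxOn (fun y' => ⟪p θ, y'⟫) B y}
  have hclosed : ∀ s : Set ℝ, IsClosed s → IsClosed (S s) :=
    fun s hs => (hc.inter_right (hs.preimage (by fun_prop))).isClosed_setOf_exists_isMaxOn B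
      (by fun_prop)
  have hcover : Icc 0 1 ⊆ S (Iic 0) ∪ S (Ici 0) := fun θ _ => by
    obtain ⟨y, hy, hmax⟩ := hc.exists_isMaxOn ⟨z, hz⟩
      (by fun_prop : Continuous fun y => ⟪p θ, y⟫).continuousOn
    rcases le_total ⟪y, n⟫ 0 with h | h
    exacts [Or.inl ⟨y, ⟨hy, h⟩, hmax⟩, Or.inr ⟨y, ⟨hy, h⟩, hmax⟩]
  have h₀ : 0 ∈ S (Iic 0) := ⟨z, ⟨hz, hnonpos⟩, by simpa [p] using hmax⟩
  have h₁ : 1 ∈ S (Ici 0) := by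
    obtain ⟨y, hy, hmax⟩ := hc.exists_isMaxOn ⟨z, hz⟩
      (by fun_prop : Continuous fun y => ⟪n, y⟫).continuousOn
    have hyz : ⟪n, -z⟫ ≤ ⟪n, y⟫ := hmax (hsymm z hz)
    rw [inner_neg_right, real_inner_comm z n, real_inner_comm y n] at hyz
    exact ⟨y, ⟨hy, show 0 ≤ ⟪y, n⟫ by linarith⟩, by simpa [p] using hmax⟩
  obtain ⟨θ, hθ, ⟨y₁, ⟨hy₁, hn₁⟩, hmax₁⟩, ⟨y₂, ⟨hy₂, hn₂⟩, hmax₂⟩⟩ :=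
    isPreconnected_closed_iff.mp isPreconnected_Icc _ _ (hclosed _ isClosed_Iic)
      (hclosed _ isClosed_Ici) hcover ⟨0, left_mem_Icc.2 zero_le_one, h₀⟩
      ⟨1, right_mem_Icc.2 zero_le_one, h₁⟩
  exact (hpd θ hθ).ne'
    (hB.inner_eq_zero_of_isMaxOn_of_isMaxOn hconv hδ hy₁ hy₂ hmax₁ hmax₂ hn₁ hn₂)

end NormalsOrthogonalOnSlab

end SupportPoints

section Gauge

variable {E : Type*} [NormedAddCommGroup E] [InnerProductSpace ℝ E]

lemma exists_inner_le_gauge_eq [CompleteSpace E] {B : Set E} (hconv : Convex ℝ B)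
    (hB0 : B ∈ 𝓝 0) (x : E) : ∃ ξ : E, (∀ y, ⟪ξ, y⟫ ≤ gauge B y) ∧ ⟪ξ, x⟫ = gauge B x := by
  rcases (gauge_nonneg (s := B) x).eq_or_lt with hx | hx
  · exact ⟨0, fun y => by simpa using gauge_nonneg y, by simp [← hx]⟩
  have hz : (gauge B x)⁻¹ • x ∉ interior B := by
    rw [← gauge_lt_one_iff_mem_interior hconv hB0, gauge_smul_of_nonneg (inv_nonneg.2 hx.le),
      smul_eq_mul, inv_mul_cancel₀ hx.ne']
    exact lt_irrefl 1
  obtain ⟨f, hfz, hf⟩ := separate_convex_open_set (mem_interior_iff_mem_nhds.mpr hB0)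
    hconv.interior isOpen_interior hz
  refine ⟨(InnerProductSpace.toDual ℝ E).symm f, fun y => ?_, ?_⟩ <;>
    rw [InnerProductSpace.toDual_symm_apply]
  · refine le_of_forall_gt fun a ha => ?_
    have ha0 : 0 < a := (gauge_nonneg y).trans_lt ha
    have hy : a⁻¹ • y ∈ interior B := by
      rwa [← gauge_lt_one_iff_mem_interior hconv hB0, gauge_smul_of_nonneg (inv_nonneg.2 ha0.le),
        smul_eq_mul, inv_mul_lt_one₀ ha0]
    simpa [inv_mul_lt_one₀ ha0] using hf _ hy
  · rw [map_smul, smul_eq_mul, inv_mul_eq_one₀ hx.ne'] at hfz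
    exact hfz.symm

theorem NormalsOrthogonalOnSlab.inner_nonpos_of_inner_lt_gauge {B : Set E} {n d : E} {δ : ℝ}
    (hB : NormalsOrthogonalOnSlab B n d δ) (hBody : IsSymmetricConvexBody B) (hδ : 0 < δ)
    (hdn : 0 < ⟪d, n⟫) {ξ x : E} (hξ : ∀ y, ⟪ξ, y⟫ ≤ gauge B y) (hξx : ⟪ξ, x⟫ = gauge B x)
    (hxn : ⟪x, n⟫ < δ * gauge B x) : ⟪ξ, d⟫ ≤ 0 := by
  have hx : 0 < gauge B x := by
    rw [gauge_pos (absorbent_nhds_zero hBody.mem_nhds_zero)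
      ((NormedSpace.isVonNBounded_iff ℝ).2 hBody.isCompact.isBounded)]
    rintro rfl
    simp at hxn
  set z := (gauge B x)⁻¹ • x
  have hz : z ∈ B := by
    rw [← hBody.isCompact.isClosed.closure_eq,
      ← gauge_le_one_iff_mem_closure hBody.convex hBody.mem_nhds_zero,
      gauge_smul_of_nonneg (inv_nonneg.2 hx.le), smul_eq_mul, inv_mul_cancel₀ hx.ne']
  refine hB.inner_nonpos_of_isMaxOn hBody.isCompact hBody.convex hBody.neg_mem hδ hdn hz
    (fun y hy => ?_) ?_
  · show ⟪ξ, y⟫ ≤ ⟪ξ, z⟫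
    rw [real_inner_smul_right, hξx, inv_mul_cancel₀ hx.ne']
    exact (hξ y).trans (gauge_le_one_of_mem hy)
  · rw [real_inner_smul_left, inv_mul_lt_iff₀ hx, mul_comm]
    exact hxn

end Gauge

lemma subset_coneGen {J : ℕ} (s : Set (EucSp J)) : s ⊆ coneGen s :=
  fun y hy => ⟨1, fun _ => 1, fun _ => y, fun _ => zero_le_one, fun _ => hy, by simp⟩

lemma inner_nonpos_of_mem_coneGen {J : ℕ} {s : Set (EucSp J)} {ξ y : EucSp J}
    (h : ∀ v ∈ s, ⟪ξ, v⟫ ≤ 0) (hy : y ∈ coneGen s) : ⟪ξ, y⟫ ≤ 0 := by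
  obtain ⟨k, r, v, hr, hv, rfl⟩ := hy
  rw [inner_sum]
  exact Finset.sum_nonpos fun i _ => by
    rw [real_inner_smul_right]
    exact mul_nonpos_of_nonneg_of_nonpos (hr i) (h _ (hv i))

structure SatisfiesAssumptionB {J N : ℕ} (n d : Fin N → EucSp J) (δ : ℝ) (B : Set (EucSp J)) :
    Prop where
  pos : 0 < δ
  body : IsSymmetricConvexBody B
  normals : ∀ i, NormalsOrthogonalOnSlab B (n i) (d i) δ

section ESP

variable {J N : ℕ} {n d : Fin N → EucSp J} {c : Fin N → ℝ}

lemma inner_nonpos_of_mem_coneGen_dCone {Z : ℝ → EucSp J} {A : Set ℝ} {ξ y : EucSp J}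
    (h : ∀ u ∈ A, ∀ i ∈ ISet n c (Z u), ⟪ξ, d i⟫ ≤ 0)
    (hy : y ∈ coneGen (⋃ u ∈ A, dCone n c d (Z u))) : ⟪ξ, y⟫ ≤ 0 := by
  refine inner_nonpos_of_mem_coneGen (fun w hw => ?_) hy
  obtain ⟨u, hu, hw⟩ := mem_iUnion₂.mp hw
  exact inner_nonpos_of_mem_coneGen (by rintro _ ⟨i, hi, rfl⟩; exact h u hu i hi) hw

variable {X₁ X₂ Z₁ Z₂ Y₁ Y₂ : ℝ → EucSp J}

lemma SolvesESP.inner_le_of_mem_ISet (hS₁ : SolvesESP n c d X₁ Z₁ Y₁)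
    (hS₂ : SolvesESP n c d X₂ Z₂ Y₂) (hn : ∀ i, ‖n i‖ = 1) {u : ℝ} (hu : 0 ≤ u) {i : Fin N}
    (hi : i ∈ ISet n c (Z₁ u)) (x : EucSp J) :
    ⟪x, n i⟫ ≤ ‖x - (Y₁ u - Y₂ u)‖ + ‖X₁ u - X₂ u‖ := by
  obtain ⟨-, -, -, hZ₁, -, -⟩ := hS₁
  obtain ⟨-, -, -, hZ₂, hG₂, -⟩ := hS₂
  have hsplit : ⟪x, n i⟫ =
      ⟪x - (Y₁ u - Y₂ u), n i⟫ + ⟪Z₁ u - Z₂ u, n i⟫ - ⟪X₁ u - X₂ u, n i⟫ := by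
    rw [← inner_add_left, ← inner_sub_left, hZ₁ u hu, hZ₂ u hu]
    congr 1
    abel
  have hZ : ⟪Z₁ u - Z₂ u, n i⟫ ≤ 0 := by
    rw [inner_sub_left, show ⟪Z₁ u, n i⟫ = c i from hi]
    linarith [hG₂ u hu i]
  have hle : ∀ y : EucSp J, |⟪y, n i⟫| ≤ ‖y‖ := fun y => by
    simpa [hn i] using abs_real_inner_le_norm y (n i)
  linarith [le_abs_self ⟪x - (Y₁ u - Y₂ u), n i⟫, neg_abs_le ⟪X₁ u - X₂ u, n i⟫,
    hle (x - (Y₁ u - Y₂ u)), hle (X₁ u - X₂ u)]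

variable {δ : ℝ} {B : Set (EucSp J)}

lemma SatisfiesAssumptionB.inner_sub_nonpos (hB : SatisfiesAssumptionB n d δ B)
    (hdn : ∀ i, 0 < ⟪d i, n i⟫) (hn : ∀ i, ‖n i‖ = 1) (hS₁ : SolvesESP n c d X₁ Z₁ Y₁)
    (hS₂ : SolvesESP n c d X₂ Z₂ Y₂) {A : Set ℝ} (hA : A ⊆ Ici 0) {y₁ y₂ : EucSp J}
    (hy₁ : y₁ ∈ coneGen (⋃ u ∈ A, dCone n c d (Z₁ u)))
    (hy₂ : y₂ ∈ coneGen (⋃ u ∈ A, dCone n c d (Z₂ u))) {ξ x : EucSp J}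
    (hξ : ∀ y, ⟪ξ, y⟫ ≤ gauge B y) (hξx : ⟪ξ, x⟫ = gauge B x)
    (hx : ∀ u ∈ A, ‖x - (Y₁ u - Y₂ u)‖ + ‖X₁ u - X₂ u‖ < δ * gauge B x) :
    ⟪ξ, y₁ - y₂⟫ ≤ 0 := by
  have hneg : ∀ y, gauge B (-y) = gauge B y := gauge_neg hB.body.neg_mem
  have h₁ : ⟪ξ, y₁⟫ ≤ 0 := inner_nonpos_of_mem_coneGen_dCone (fun u hu i hi =>
    (hB.normals i).inner_nonpos_of_inner_lt_gauge hB.body hB.pos (hdn i) hξ hξx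
      ((hS₁.inner_le_of_mem_ISet hS₂ hn (hA hu) hi x).trans_lt (hx u hu))) hy₁
  -- The second solution is handled by the same argument applied to `-x` and `-ξ`.
  have h₂ : ⟪-ξ, y₂⟫ ≤ 0 := inner_nonpos_of_mem_coneGen_dCone (fun u hu i hi => by
    refine (hB.normals i).inner_nonpos_of_inner_lt_gauge hB.body hB.pos (hdn i) (x := -x)
      (fun y => by simpa [hneg] using hξ (-y)) (by simpa [hneg] using hξx) ?_
    have h := hS₂.inner_le_of_mem_ISet hS₁ hn (hA hu) hi (-x)
    have hnorm : ‖-x - (Y₂ u - Y₁ u)‖ = ‖x - (Y₁ u - Y₂ u)‖ := by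
      rw [← norm_neg]
      congr 1
      abel
    rw [hnorm, norm_sub_rev (X₂ u)] at h
    rw [hneg]
    exact h.trans_lt (hx u hu)) hy₂
  rw [inner_neg_left] at h₂
  rw [inner_sub_right]
  linarith

lemma SatisfiesAssumptionB.mul_gauge_sub_zero_le (hB : SatisfiesAssumptionB n d δ B)
    (hdn : ∀ i, 0 < ⟪d i, n i⟫) (hn : ∀ i, ‖n i‖ = 1) (hS₁ : SolvesESP n c d X₁ Z₁ Y₁)
    (hS₂ : SolvesESP n c d X₂ Z₂ Y₂) :
    δ * gauge B (Y₁ 0 - Y₂ 0) ≤ ‖X₁ 0 - X₂ 0‖ := by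
  by_contra! h
  obtain ⟨ξ, hξ, hξx⟩ := exists_inner_le_gauge_eq hB.body.convex hB.body.mem_nhds_zero
    (Y₁ 0 - Y₂ 0)
  have hY : ∀ {X Z Y : ℝ → EucSp J}, SolvesESP n c d X Z Y →
      Y 0 ∈ coneGen (⋃ u ∈ ({0} : Set ℝ), dCone n c d (Z u)) := fun hS => by
    simpa using subset_coneGen _ hS.2.2.1
  have hle := hB.inner_sub_nonpos hdn hn hS₁ hS₂ (by simp) (hY hS₁) (hY hS₂) hξ hξx
    (by simpa using h)
  have hpos : 0 < gauge B (Y₁ 0 - Y₂ 0) :=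
    pos_of_mul_pos_right ((norm_nonneg _).trans_lt h) hB.pos.le
  linarith

lemma SatisfiesAssumptionB.exists_gauge_sub_le (hB : SatisfiesAssumptionB n d δ B)
    (hdn : ∀ i, 0 < ⟪d i, n i⟫) (hn : ∀ i, ‖n i‖ = 1) (hS₁ : SolvesESP n c d X₁ Z₁ Y₁)
    (hS₂ : SolvesESP n c d X₂ Z₂ Y₂) {b U : ℝ} (hb : 0 < b)
    (hU : ∀ u ∈ Ioc 0 b, ‖X₁ u - X₂ u‖ ≤ U) (hUb : U < δ * gauge B (Y₁ b - Y₂ b)) :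
    ∃ a ∈ Ico 0 b, gauge B (Y₁ b - Y₂ b) ≤ gauge B (Y₁ a - Y₂ a) := by
  have hv : ContinuousOn (fun t => Y₁ t - Y₂ t) (Ici 0) := hS₁.2.1.sub hS₂.2.1
  obtain ⟨η, hη, hcont⟩ := Metric.continuousWithinAt_iff.mp (hv b hb.le) _ (sub_pos.2 hUb)
  set a := max 0 (b - η / 2)
  have ha : a ∈ Ico 0 b := ⟨le_max_left _ _, max_lt hb (by linarith)⟩
  have hclose : ∀ u ∈ Ioc a b, ‖Y₁ b - Y₂ b - (Y₁ u - Y₂ u)‖ + ‖X₁ u - X₂ u‖ <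
      δ * gauge B (Y₁ b - Y₂ b) := fun u hu => by
    have hu0 : 0 < u := (le_max_left _ _).trans_lt hu.1
    have hdist := hcont (mem_Ici.2 hu0.le) (by
      rw [Real.dist_eq, abs_sub_lt_iff]
      constructor <;> linarith [le_max_right 0 (b - η / 2), hu.1, hu.2])
    rw [dist_eq_norm, norm_sub_rev] at hdist
    linarith [hU u ⟨hu0, hu.2⟩]
  obtain ⟨ξ, hξ, hξx⟩ := exists_inner_le_gauge_eq hB.body.convex hB.body.mem_nhds_zero
    (Y₁ b - Y₂ b)
  have hle := hB.inner_sub_nonpos hdn hn hS₁ hS₂ (fun u hu => ha.1.trans hu.1.le)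
    (hS₁.2.2.2.2.2 a b ha.1 ha.2) (hS₂.2.2.2.2.2 a b ha.1 ha.2) hξ hξx hclose
  refine ⟨a, ha, ?_⟩
  calc gauge B (Y₁ b - Y₂ b) = ⟪ξ, Y₁ a - Y₂ a⟫ + ⟪ξ, (Y₁ b - Y₁ a) - (Y₂ b - Y₂ a)⟫ := by
        rw [← hξx, ← inner_add_right]
        congr 1
        abel
    _ ≤ gauge B (Y₁ a - Y₂ a) := by linarith [hξ (Y₁ a - Y₂ a)]

/-- If the bound failed, take the first time `t₀` at which `gauge B (Y₁ - Y₂)` reaches its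
maximum over `[0, T]`; the two previous lemmas show that it is already reached before `t₀`. -/
theorem SatisfiesAssumptionB.mul_gauge_sub_le (hB : SatisfiesAssumptionB n d δ B)
    (hdn : ∀ i, 0 < ⟪d i, n i⟫) (hn : ∀ i, ‖n i‖ = 1) (hS₁ : SolvesESP n c d X₁ Z₁ Y₁)
    (hS₂ : SolvesESP n c d X₂ Z₂ Y₂) {T U : ℝ} (hT : 0 ≤ T)
    (hU : ∀ t ∈ Icc 0 T, ‖X₁ t - X₂ t‖ ≤ U) :
    ∀ t ∈ Icc 0 T, δ * gauge B (Y₁ t - Y₂ t) ≤ U := by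
  set g : ℝ → ℝ := fun t => gauge B (Y₁ t - Y₂ t)
  have hg : ContinuousOn g (Icc 0 T) :=
    (continuous_gauge hB.body.convex hB.body.mem_nhds_zero).comp_continuousOn
      ((hS₁.2.1.sub hS₂.2.1).mono Icc_subset_Ici_self)
  obtain ⟨tmax, htmax, hmax⟩ := isCompact_Icc.exists_isMaxOn (nonempty_Icc.2 hT) hg
  set S := Icc 0 T ∩ g ⁻¹' {g tmax}
  have hS : IsCompact S := isCompact_Icc.of_isClosed_subset
    (hg.preimage_isClosed_of_isClosed isClosed_Icc isClosed_singleton) inter_subset_left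
  obtain ⟨⟨ht₀0, ht₀T⟩, ht₀⟩ : sInf S ∈ S := hS.sInf_mem ⟨tmax, htmax, rfl⟩
  set t₀ := sInf S
  suffices h : δ * g t₀ ≤ U from fun t ht => by
    have : g t ≤ g t₀ := ht₀ ▸ hmax ht
    nlinarith [hB.pos]
  by_contra! hlt
  rcases ht₀0.eq_or_lt with h0 | hpos
  · rw [← h0] at hlt
    linarith [hB.mul_gauge_sub_zero_le hdn hn hS₁ hS₂, hU 0 (left_mem_Icc.2 hT)]
  obtain ⟨a, ha, hga⟩ := hB.exists_gauge_sub_le hdn hn hS₁ hS₂ hpos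
    (fun u hu => hU u ⟨hu.1.le, hu.2.trans ht₀T⟩) hlt
  have haS : a ∈ S := ⟨⟨ha.1, ha.2.le.trans ht₀T⟩,
    le_antisymm (hmax ⟨ha.1, ha.2.le.trans ht₀T⟩) (ht₀ ▸ hga)⟩
  exact (csInf_le hS.bddBelow haS).not_gt ha.2

end ESP

lemma norm_le_supNorm {J : ℕ} {f : ℝ → EucSp J} {T : ℝ} (hf : ContinuousOn f (Icc 0 T))
    {t : ℝ} (ht : t ∈ Icc 0 T) : ‖f t‖ ≤ supNorm f T := by
  have hbdd : BddAbove (range fun s : Icc (0:ℝ) T => ‖f s‖) :=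
    (isCompact_Icc.image_of_continuousOn hf.norm).bddAbove.mono
      (by rintro _ ⟨s, rfl⟩; exact ⟨s, s.2, rfl⟩)
  exact le_ciSup hbdd ⟨t, ht⟩

lemma supNorm_le {J : ℕ} {f : ℝ → EucSp J} {T a : ℝ} (hT : 0 ≤ T)
    (h : ∀ t ∈ Icc 0 T, ‖f t‖ ≤ a) : supNorm f T ≤ a :=
  have : Nonempty (Icc (0:ℝ) T) := ⟨⟨0, le_rfl, hT⟩⟩
  ciSup_le fun s => h s.1 s.2

theorem statement0_general (J N : ℕ)
    (n d : Fin N → EucSp J) (c : Fin N → ℝ)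
    (hn : ∀ i, ‖n i‖ = 1) (hdn : ∀ i, ⟪d i, n i⟫ = 1)
    (hB : AssumptionB n d) :
    ∃ κ : ℝ, 0 < κ ∧
      ∀ X₁ X₂ Z₁ Y₁ Z₂ Y₂ : ℝ → EucSp J,
        ContinuousOn X₁ (Ici 0) → ContinuousOn X₂ (Ici 0) →
        SolvesESP n c d X₁ Z₁ Y₁ → SolvesESP n c d X₂ Z₂ Y₂ →
        ∀ T : ℝ, 0 ≤ T →
          supNorm (fun s => Z₁ s - Z₂ s) T ≤ κ * supNorm (fun s => X₁ s - X₂ s) T := by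
  obtain ⟨δ, hδ, B, hBc, hBconv, hBsymm, hB0, hBn⟩ := hB
  have hAB : SatisfiesAssumptionB n d δ B :=
    ⟨hδ, ⟨hBc, hBconv, hBsymm, mem_interior_iff_mem_nhds.mp hB0⟩, hBn⟩
  obtain ⟨R, hR, hBR⟩ := hBc.isBounded.subset_closedBall_lt 0 0
  refine ⟨1 + R / δ, by positivity, fun X₁ X₂ Z₁ Y₁ Z₂ Y₂ hX₁ hX₂ hS₁ hS₂ T hT => ?_⟩
  set U := supNorm (fun s => X₁ s - X₂ s) T
  have hU : ∀ t ∈ Icc 0 T, ‖X₁ t - X₂ t‖ ≤ U := fun t ht =>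
    norm_le_supNorm ((hX₁.sub hX₂).mono Icc_subset_Ici_self) ht
  have hY := hAB.mul_gauge_sub_le (fun i => by simp [hdn i]) hn hS₁ hS₂ hT hU
  refine supNorm_le hT fun t ht => ?_
  have hZ : Z₁ t - Z₂ t = (X₁ t - X₂ t) + (Y₁ t - Y₂ t) := by
    rw [hS₁.2.2.2.1 t ht.1, hS₂.2.2.2.1 t ht.1]
    abel
  have hYR : ‖Y₁ t - Y₂ t‖ ≤ R * gauge B (Y₁ t - Y₂ t) := by
    have := le_gauge_of_subset_closedBall (x := Y₁ t - Y₂ t)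
      (absorbent_nhds_zero hAB.body.mem_nhds_zero) hR.le hBR
    rwa [div_le_iff₀ hR, mul_comm] at this
  have hgU : gauge B (Y₁ t - Y₂ t) ≤ U / δ := by
    rw [le_div_iff₀ hδ, mul_comm]
    exact hY t ht
  calc ‖Z₁ t - Z₂ t‖ ≤ ‖X₁ t - X₂ t‖ + ‖Y₁ t - Y₂ t‖ := hZ ▸ norm_add_le _ _
    _ ≤ U + R * (U / δ) := add_le_add (hU t ht) (hYR.trans (by gcongr))
    _ = (1 + R / δ) * U := by ring

/-- **Theorem (Lipschitz continuity of the ESM).**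
Under Assumption (B), there is `κ ∈ (0,∞)` such that whenever `(Z₁,Y₁)` solves the ESP for a
continuous `X₁` and `(Z₂,Y₂)` solves the ESP for a continuous `X₂`, one has
`‖Z₁ − Z₂‖_T ≤ κ ‖X₁ − X₂‖_T` for every `T ≥ 0`. -/
theorem statement0 (J N : ℕ) (hJ : 1 ≤ J) (hN : 1 ≤ N)
    (n d : Fin N → EucSp J) (c : Fin N → ℝ)
    (hn : ∀ i, ‖n i‖ = 1) (hdn : ∀ i, ⟪d i, n i⟫ = 1)
    (hGne : (Gset n c).Nonempty)
    (hB : AssumptionB n d) :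
    ∃ κ : ℝ, 0 < κ ∧
      ∀ X₁ X₂ Z₁ Y₁ Z₂ Y₂ : ℝ → EucSp J,
        ContinuousOn X₁ (Ici 0) → ContinuousOn X₂ (Ici 0) →
        SolvesESP n c d X₁ Z₁ Y₁ → SolvesESP n c d X₂ Z₂ Y₂ →
        ∀ T : ℝ, 0 ≤ T →
          supNorm (fun s => Z₁ s - Z₂ s) T ≤ κ * supNorm (fun s => X₁ s - X₂ s) T :=
  statement0_general J N n d c hn hdn hB
end
end

section
/- Let U ∈ (0,∞] and let Z : [0,U) → G be continuous and satisfy condition (4) of the boundary jitter property on [0,U). Suppose 0 ≤ S < T < U are such that Z(T) ∈ N* and I(Z(t)) ⊊ I(Z(T)) for all t ∈ [S,T). Then there exists a sequence S = ξ₀ < s₁ ≤ ξ₁ < s₂ ≤ ξ₂ < ⋯ < T with ξ_j → T as j → ∞ such that for each j ≥ 1: Z(ξ_j) ∈ ∂G, ⋃_{t∈[ξ_{j−1},s_j)} I(Z(t)) ⊆ I(Z(ξ_{j−1})), and ⋃_{t∈[s_j,ξ_j]} I(Z(t)) ⊆ I(Z(ξ_j)). -/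
open scoped RealInnerProductSpace ENNReal NNReal
open Filter Topology Set MeasureTheory

noncomputable section

/-!
Write `A t = I(Z t)`. Since the constraints inactive at `Z t` stay inactive nearby, `A` is upper
hemicontinuous: the active set can only shrink near any time. From a time `a`, run one step as far
as possible towards a time `σ < T` with `A σ ≠ ∅` (these exist arbitrarily close to `T` by the
jitter condition at `T`): leave `A a` at the first time `τ` the active set escapes it, and stop at
the last time `b ≤ σ` with `A t ⊆ A b` on `[τ, b]`; upper hemicontinuity makes both times attained.
Iterating with `σ → T` gives `ξ_j`. If `ξ_j` increased to some `M < T`, upper hemicontinuity at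
`M` would let the step from some `ξ_j` run on to `M`, beyond `ξ_{j+1}`, against its maximality.
-/

section UpperHemicontinuous

variable {α ι : Type*} [TopologicalSpace α] [TopologicalSpace ι] [DiscreteTopology ι]
  {A : α → Set ι} {s : Set α}

theorem UpperHemicontinuousOn.eventually_subset (hA : UpperHemicontinuousOn A s) {x : α}
    (hx : x ∈ s) : ∀ᶠ y in 𝓝[s] x, A y ⊆ A x := by
  have hprincipal : ∀ t : Set ι, 𝓝ˢ t = 𝓟 t := fun t => (isOpen_discrete t).nhdsSet_eq
  simpa only [hprincipal, mem_principal] using hA x hx (A x) (by simp [hprincipal])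

theorem UpperHemicontinuousOn.isClosed_setOf_not_subset (hA : UpperHemicontinuousOn A s)
    (hs : IsClosed s) (C : Set ι) : IsClosed {x ∈ s | ¬ A x ⊆ C} := by
  refine isClosed_of_closure_subset fun x hx => ?_
  have hxs : x ∈ s := hs.closure_subset (closure_mono (sep_subset _ _) hx)
  refine ⟨hxs, fun hxC => ?_⟩
  obtain ⟨y, ⟨hys, hyC⟩, hy⟩ := ((mem_closure_iff_frequently.1 hx).and_eventually
    (eventually_nhdsWithin_iff.1 (hA.eventually_subset hxs))).exists
  exact hyC ((hy hys).trans hxC)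

end UpperHemicontinuous

section ActiveStep

variable {α ι : Type*} [ConditionallyCompleteLinearOrder α] [TopologicalSpace α]
  [OrderTopology α] [TopologicalSpace ι] [DiscreteTopology ι] {A : α → Set ι} {a b σ τ x : α}

/-- One link `ξ_{j-1} < s_j ≤ ξ_j` of the chain in the conclusion, with `a = ξ_{j-1}`, `u = ξ_j`. -/
def IsActiveStep (A : α → Set ι) (a s u : α) : Prop :=
  a < s ∧ s ≤ u ∧ (∀ t ∈ Ico a s, A t ⊆ A a) ∧ ∀ t ∈ Icc s u, A t ⊆ A u

theorem UpperHemicontinuousOn.exists_Ioc_subset (hA : UpperHemicontinuousOn A (Icc a b))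
    (hx : x ∈ Ioc a b) : ∃ l < x, ∀ t ∈ Ioc l x, A t ⊆ A x := by
  have h := (hA.eventually_subset (Ioc_subset_Icc_self hx)).filter_mono
    (nhdsWithin_le_of_mem (Icc_mem_nhdsLE_of_mem hx))
  exact (mem_nhdsLE_iff_exists_Ioc_subset' hx.1).1 h

theorem UpperHemicontinuousOn.exists_isGreatest_absorbing
    (hA : UpperHemicontinuousOn A (Icc a σ)) (hτ : τ ∈ Ioc a σ) :
    ∃ L, IsGreatest {u ∈ Icc τ σ | ∀ t ∈ Icc τ u, A t ⊆ A u} L := by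
  set W := {u ∈ Icc τ σ | ∀ t ∈ Icc τ u, A t ⊆ A u}
  have hτW : τ ∈ W := ⟨⟨le_rfl, hτ.2⟩, fun t ht => by rw [le_antisymm ht.2 ht.1]⟩
  have hbdd : BddAbove W := ⟨σ, fun u hu => hu.1.2⟩
  refine ⟨sSup W, ?_, fun u hu => le_csSup hbdd hu⟩
  have hL : sSup W ∈ Icc τ σ := ⟨le_csSup hbdd hτW, csSup_le ⟨τ, hτW⟩ fun u hu => hu.1.2⟩
  refine ⟨hL, fun t ht => ?_⟩
  rcases ht.2.eq_or_lt with rfl | htL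
  · exact subset_rfl
  obtain ⟨l, hlL, hl⟩ := hA.exists_Ioc_subset ⟨hτ.1.trans_le hL.1, hL.2⟩
  obtain ⟨u, huW, hu⟩ := exists_lt_of_lt_csSup ⟨τ, hτW⟩ (max_lt hlL htL)
  exact (huW.2 t ⟨ht.1, (le_max_right _ _).trans hu.le⟩).trans
    (hl u ⟨(le_max_left _ _).trans_lt hu, le_csSup hbdd huW⟩)

theorem UpperHemicontinuousOn.exists_maximal_isActiveStep
    (hA : UpperHemicontinuousOn A (Icc a σ)) (haσ : a < σ) (hσ : (A σ).Nonempty) :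
    ∃ b s, IsActiveStep A a s b ∧ b ≤ σ ∧ (A b).Nonempty ∧
      ∀ u ∈ Ioc b σ, ∀ s', ¬ IsActiveStep A a s' u := by
  set B := {t ∈ Icc a σ | ¬ A t ⊆ A a}
  rcases B.eq_empty_or_nonempty with hB | hB
  · refine ⟨σ, σ, ⟨haσ, le_rfl, fun t ht => ?_, fun t ht => ?_⟩, le_rfl, hσ,
      fun u hu => absurd hu.2 hu.1.not_ge⟩
    · by_contra h
      exact hB.subset ⟨⟨ht.1, ht.2.le⟩, h⟩
    · rw [le_antisymm ht.2 ht.1]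
  have hBbdd : BddBelow B := ⟨a, fun t ht => ht.1.1⟩
  have hτB : sInf B ∈ B := (hA.isClosed_setOf_not_subset isClosed_Icc _).csInf_mem hB hBbdd
  set τ := sInf B
  have haτ : a < τ := hτB.1.1.lt_of_ne fun h => hτB.2 (h ▸ subset_rfl)
  have hbefore : ∀ t ∈ Ico a τ, A t ⊆ A a := fun t ht => by
    by_contra h
    exact ht.2.not_ge (csInf_le hBbdd ⟨⟨ht.1, ht.2.le.trans hτB.1.2⟩, h⟩)
  obtain ⟨L, ⟨hL, hLabs⟩, hLmax⟩ := hA.exists_isGreatest_absorbing ⟨haτ, hτB.1.2⟩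
  refine ⟨L, τ, ⟨haτ, hL.1, hbefore, hLabs⟩, hL.2, ?_, ?_⟩
  · obtain ⟨i, hi, -⟩ := not_subset.1 hτB.2
    exact ⟨i, hLabs τ ⟨le_rfl, hL.1⟩ hi⟩
  · rintro u ⟨hLu, huσ⟩ s' ⟨-, -, hleave, hreach⟩
    have hs'τ : s' ≤ τ := le_of_not_gt fun h => hτB.2 (hleave τ ⟨haτ.le, h⟩)
    exact hLu.not_ge (hLmax ⟨⟨hL.1.trans hLu.le, huσ⟩,
      fun t ht => hreach t ⟨hs'τ.trans ht.1, ht.2⟩⟩)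

end ActiveStep

section ActiveStepSeq

variable {ι : Type*} [TopologicalSpace ι] [DiscreteTopology ι] {A : ℝ → Set ι} {a₀ T : ℝ}

theorem UpperHemicontinuousOn.tendsto_of_maximal_isActiveStep
    (hA : UpperHemicontinuousOn A (Icc a₀ T)) {ξ s : ℕ → ℝ} (hξ : ∀ j, ξ j ∈ Ico a₀ T)
    (hstep : ∀ j, IsActiveStep A (ξ j) (s j) (ξ (j + 1)))
    (hmax : ∀ j, ∀ u ∈ Ioc (ξ (j + 1)) (T - 1 / (j + 1)), ∀ s', ¬ IsActiveStep A (ξ j) s' u) :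
    Tendsto ξ atTop (𝓝 T) := by
  have hmono : StrictMono ξ := strictMono_nat_of_lt_succ fun j => (hstep j).1.trans_le (hstep j).2.1
  have hbdd : BddAbove (range ξ) := ⟨T, forall_mem_range.2 fun j => (hξ j).2.le⟩
  have hM : Tendsto ξ atTop (𝓝 (⨆ j, ξ j)) := tendsto_atTop_ciSup hmono.monotone hbdd
  rcases (ciSup_le fun j => (hξ j).2.le : (⨆ j, ξ j) ≤ T).eq_or_lt with hMT | hMT
  · rwa [hMT] at hM
  set M := ⨆ j, ξ j
  have hξM : ∀ j, ξ j < M := fun j => (hmono j.lt_succ_self).trans_le (le_ciSup hbdd _)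
  obtain ⟨l, hlM, hl⟩ := hA.exists_Ioc_subset ⟨(hξ 0).1.trans_lt (hξM 0), hMT.le⟩
  have hgap : ∀ᶠ j : ℕ in atTop, 1 / ((j : ℝ) + 1) < T - M :=
    tendsto_one_div_add_atTop_nhds_zero_nat.eventually (gt_mem_nhds (sub_pos.2 hMT))
  obtain ⟨j, hlj, hj⟩ := ((hM.eventually (lt_mem_nhds hlM)).and hgap).exists
  refine (hmax j M ⟨hξM (j + 1), by linarith⟩ (s j)
    ⟨(hstep j).1, (hstep j).2.1.trans (hξM _).le, (hstep j).2.2.1, fun t ht => ?_⟩).elim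
  exact hl t ⟨hlj.trans ((hstep j).1.trans_le ht.1), ht.2⟩

theorem UpperHemicontinuousOn.exists_seq_isActiveStep_tendsto
    (hA : UpperHemicontinuousOn A (Icc a₀ T)) (ha₀ : a₀ < T)
    (hfreq : ∀ a ∈ Ico a₀ T, ∃ σ ∈ Ioo a T, (A σ).Nonempty) :
    ∃ ξ s : ℕ → ℝ, ξ 0 = a₀ ∧ (∀ j, ξ j ∈ Ico a₀ T) ∧
      (∀ j, IsActiveStep A (ξ j) (s j) (ξ (j + 1)) ∧ (A (ξ (j + 1))).Nonempty) ∧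
      Tendsto ξ atTop (𝓝 T) := by
  have hnext : ∀ (j : ℕ) (a : Ico a₀ T), ∃ b : Ico a₀ T, ∃ s, IsActiveStep A a s b ∧
      (A b).Nonempty ∧ ∀ u ∈ Ioc (b : ℝ) (T - 1 / (j + 1)), ∀ s', ¬ IsActiveStep A a s' u := by
    rintro j ⟨a, ha₀a, haT⟩
    obtain ⟨σ, ⟨hσa, hσT⟩, hσ⟩ := hfreq (max a (T - 1 / (j + 1)))
      ⟨ha₀a.trans (le_max_left _ _), max_lt haT (by simp only [sub_lt_self_iff]; positivity)⟩
    have hAσ := hA.mono (Icc_subset_Icc ha₀a hσT.le)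
    obtain ⟨b, s, hstep, hbσ, hb, hmax⟩ :=
      hAσ.exists_maximal_isActiveStep ((le_max_left _ _).trans_lt hσa) hσ
    exact ⟨⟨b, ha₀a.trans (hstep.1.le.trans hstep.2.1), hbσ.trans_lt hσT⟩, s, hstep, hb,
      fun u hu => hmax u ⟨hu.1, hu.2.trans ((le_max_right _ _).trans hσa.le)⟩⟩
  choose next s hstep using hnext
  let ξ : ℕ → Ico a₀ T := fun j => Nat.rec ⟨a₀, le_rfl, ha₀⟩ next j
  refine ⟨fun j => (ξ j).1, fun j => s j (ξ j), rfl, fun j => (ξ j).2, fun j => ?_, ?_⟩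
  · exact ⟨(hstep j (ξ j)).1, (hstep j (ξ j)).2.1⟩
  · exact hA.tendsto_of_maximal_isActiveStep (fun j => (ξ j).2) (fun j => (hstep j (ξ j)).1)
      fun j => (hstep j (ξ j)).2.2

end ActiveStepSeq

theorem eventually_nhds_ISet_subset {J N : ℕ} (n : Fin N → EucSp J) (c : Fin N → ℝ)
    (x : EucSp J) : ∀ᶠ y in 𝓝 x, ISet n c y ⊆ ISet n c x := by
  have hk : ∀ k, ∀ᶠ y in 𝓝 x, k ∈ ISet n c y → k ∈ ISet n c x := fun k => by
    by_cases hkx : k ∈ ISet n c x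
    · exact .of_forall fun _ _ => hkx
    · exact ((continuous_id.inner continuous_const).continuousAt.eventually_ne hkx).mono
        fun y hy hky => absurd hky hy
  filter_upwards [eventually_all.2 hk] with y hy k hky using hy k hky

theorem ContinuousOn.upperHemicontinuousOn_ISet {J N : ℕ} {n : Fin N → EucSp J}
    {c : Fin N → ℝ} {α : Type*} [TopologicalSpace α] {Z : α → EucSp J} {s : Set α}
    (hZ : ContinuousOn Z s) : UpperHemicontinuousOn (fun t => ISet n c (Z t)) s :=
  fun t ht _ hB => ((hZ t ht).tendsto.eventually (eventually_nhds_ISet_subset n c (Z t))).mono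
    fun _ h => nhdsSet_mono h hB

theorem mem_frontier_Gset_of_mem_ISet {J N : ℕ} {n : Fin N → EucSp J} {c : Fin N → ℝ}
    {x : EucSp J} {i : Fin N} (hx : x ∈ Gset n c) (hi : i ∈ ISet n c x) (hni : n i ≠ 0) :
    x ∈ frontier (Gset n c) := by
  refine ⟨subset_closure hx, fun hint => ?_⟩
  have hpush : Tendsto (fun r : ℝ => x - r • n i) (𝓝[>] 0) (𝓝 x) := by
    have : Continuous fun r : ℝ => x - r • n i := by fun_prop
    simpa using this.continuousAt.tendsto.mono_left (nhdsWithin_le_nhds (a := (0 : ℝ)))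
  obtain ⟨r, hrG, hr⟩ := ((hpush.eventually (mem_interior_iff_mem_nhds.1 hint)).and
    self_mem_nhdsWithin).exists
  have hout := hrG i
  rw [inner_sub_left, real_inner_smul_left, show ⟪x, n i⟫ = c i from hi] at hout
  nlinarith [real_inner_self_pos.2 hni, (hr : (0 : ℝ) < r)]

theorem statement7_general (J N : ℕ)
    (n : Fin N → EucSp J) (c : Fin N → ℝ)
    (hn : ∀ i, ‖n i‖ = 1)
    (U : ℝ≥0∞)
    (Z : ℝ → EucSp J)
    (hZcont : ContinuousOn Z {t : ℝ | 0 ≤ t ∧ ENNReal.ofReal t < U})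
    (hZG : ∀ t : ℝ, 0 ≤ t → ENNReal.ofReal t < U → Z t ∈ Gset n c)
    -- condition (4) of the boundary jitter property on `[0,U)`
    (hjit4 : ∀ t : ℝ, 0 < t → ENNReal.ofReal t < U → Z t ∈ Nstar n c →
      ∀ i ∈ ISet n c (Z t), ∀ δ : ℝ, 0 < δ → δ < t →
        ∃ s ∈ Ioo (t - δ) t, ISet n c (Z s) = {i})
    (S T : ℝ) (hS : 0 ≤ S) (hST : S < T) (hTU : ENNReal.ofReal T < U)
    (hZT : Z T ∈ Nstar n c) :
    ∃ ξ s : ℕ → ℝ,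
      ξ 0 = S ∧
      (∀ j : ℕ, ξ j < s j ∧ s j ≤ ξ (j + 1) ∧ ξ (j + 1) < T) ∧
      Tendsto ξ atTop (𝓝 T) ∧
      ∀ j : ℕ,
        Z (ξ (j + 1)) ∈ frontier (Gset n c) ∧
        (∀ t ∈ Ico (ξ j) (s j), ISet n c (Z t) ⊆ ISet n c (Z (ξ j))) ∧
        (∀ t ∈ Icc (s j) (ξ (j + 1)), ISet n c (Z t) ⊆ ISet n c (Z (ξ (j + 1)))) := by
  have hT : 0 < T := hS.trans_lt hST
  have hdom : Icc S T ⊆ {t : ℝ | 0 ≤ t ∧ ENNReal.ofReal t < U} := fun t ht =>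
    ⟨hS.trans ht.1, (ENNReal.ofReal_le_ofReal ht.2).trans_lt hTU⟩
  obtain ⟨i₀, hi₀⟩ := nonempty_of_ncard_ne_zero (by linarith [hZT.2] : (ISet n c (Z T)).ncard ≠ 0)
  have hnearT : ∀ a ∈ Ico S T, ∃ σ ∈ Ioo a T, (ISet n c (Z σ)).Nonempty := fun a ha => by
    obtain ⟨σ, hσ, hσi₀⟩ := hjit4 T hT hTU hZT i₀ hi₀ ((T - a) / 2) (by linarith [ha.2])
      (by linarith [ha.1])
    exact ⟨σ, ⟨by linarith [(mem_Ioo.1 hσ).1, ha.2], hσ.2⟩, hσi₀ ▸ singleton_nonempty i₀⟩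
  obtain ⟨ξ, s, hξ0, hξ, hstep, hlim⟩ :=
    (hZcont.mono hdom).upperHemicontinuousOn_ISet.exists_seq_isActiveStep_tendsto hST hnearT
  refine ⟨ξ, s, hξ0, fun j => ⟨(hstep j).1.1, (hstep j).1.2.1, (hξ (j + 1)).2⟩, hlim,
    fun j => ⟨?_, (hstep j).1.2.2.1, (hstep j).1.2.2.2⟩⟩
  obtain ⟨i, hi⟩ := (hstep j).2
  have hξdom := hdom (Ico_subset_Icc_self (hξ (j + 1)))
  exact mem_frontier_Gset_of_mem_ISet (hZG _ hξdom.1 hξdom.2) hi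
    (norm_ne_zero_iff.1 (by simp [hn]))

/-- **Lemma (oscillation structure before hitting the nonsmooth boundary).**
If `Z : [0,U) → G` is continuous and satisfies condition (4) of the boundary jitter property,
`Z T ∈ N*` and `I(Z t) ⊊ I(Z T)` on `[S,T)`, then there is a nested increasing sequence
`S = ξ₀ < s₁ ≤ ξ₁ < s₂ ≤ ξ₂ < ⋯ < T` with `ξ_j → T`, `Z ξ_j ∈ ∂G`, and the stated inclusions
of active index sets.  (Here `s j` plays the role of `s_{j+1}` and `ξ (j+1)` of `ξ_{j+1}`.) -/
theorem statement7 (J N : ℕ) (hJ : 1 ≤ J) (hN : 1 ≤ N)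
    (n d : Fin N → EucSp J) (c : Fin N → ℝ)
    (hn : ∀ i, ‖n i‖ = 1) (hdn : ∀ i, ⟪d i, n i⟫ = 1)
    (hGne : (Gset n c).Nonempty)
    (U : ℝ≥0∞) (hU : 0 < U)
    (Z : ℝ → EucSp J)
    (hZcont : ContinuousOn Z {t : ℝ | 0 ≤ t ∧ ENNReal.ofReal t < U})
    (hZG : ∀ t : ℝ, 0 ≤ t → ENNReal.ofReal t < U → Z t ∈ Gset n c)
    -- condition (4) of the boundary jitter property on `[0,U)`
    (hjit4 : ∀ t : ℝ, 0 < t → ENNReal.ofReal t < U → Z t ∈ Nstar n c →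
      ∀ i ∈ ISet n c (Z t), ∀ δ : ℝ, 0 < δ → δ < t →
        ∃ s ∈ Ioo (t - δ) t, ISet n c (Z s) = {i})
    (S T : ℝ) (hS : 0 ≤ S) (hST : S < T) (hTU : ENNReal.ofReal T < U)
    (hZT : Z T ∈ Nstar n c)
    (hstrict : ∀ t ∈ Ico S T, ISet n c (Z t) ⊂ ISet n c (Z T)) :
    ∃ ξ s : ℕ → ℝ,
      ξ 0 = S ∧
      (∀ j : ℕ, ξ j < s j ∧ s j ≤ ξ (j + 1) ∧ ξ (j + 1) < T) ∧
      Tendsto ξ atTop (𝓝 T) ∧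
      ∀ j : ℕ,
        Z (ξ (j + 1)) ∈ frontier (Gset n c) ∧
        (∀ t ∈ Ico (ξ j) (s j), ISet n c (Z t) ⊆ ISet n c (Z (ξ j))) ∧
        (∀ t ∈ Icc (s j) (ξ (j + 1)), ISet n c (Z t) ⊆ ISet n c (Z (ξ (j + 1)))) :=
  statement7_general J N n c hn U Z hZcont hZG hjit4 S T hS hST hTU hZT
end
end

section
/- Suppose the ESP data satisfies Assumption (B), X is continuous with X(0) ∈ G, and (Z,Y) solves the ESP for X. Let (ψ_k) be a sequence in D_r converging to ψ ∈ D_r uniformly on compact subsets of [0,∞), fix T ∈ (0,∞), and suppose that for each k the pair (φ_k,η_k) solves the DP associated with Z for ψ_k on [0,T). Then there exist right-continuous functions with finite left limits φ, η : [0,T) → ℝ^J such that (φ_k,η_k) → (φ,η) uniformly on every compact subinterval of [0,T) as k → ∞, and (φ,η) solves the DP associated with Z for ψ on [0,T). -/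
open scoped RealInnerProductSpace ENNReal NNReal
open Filter Topology Set MeasureTheory

noncomputable section

/-! The heart of the matter is an a priori estimate: if `(φ, η)` solves the DP for `ψ` on `[0, T)`
and `‖ψ‖ ≤ M` on `[0, t]`, then `gauge_B (η u) ≤ M / δ` for `u ∈ [0, t]`. Suppose not, and let
`u₀` be the first time (it exists by right continuity) at which `gauge_B ∘ η` reaches some level
above `M / δ`. On an active face `i` at `u₀` we have `|⟪η u₀, nᵢ⟫| = |⟪ψ u₀, nᵢ⟫| ≤ M`, which is
small compared with `gauge_B (η u₀)`, so by Assumption (B) a supporting functional `p` of the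
gauge at `η u₀` annihilates every `dᵢ` active at `u₀`. Faces active just before `u₀` are active
at `u₀`, so `⟪p, η⟫` is constant just before `u₀` and the level was reached earlier, which is
absurd.

By linearity of the DP, the estimate turns `(ψ_k)` being uniformly Cauchy on compacts into
`(η_k)` being so. The limit `(ψ + η, η)` solves the DP because every constraint is closed, and it
is right continuous with left limits as a uniform limit of such functions. -/

theorem exists_norm_le_mul_gauge {F : Type*} [NormedAddCommGroup F] [NormedSpace ℝ F]
    {B : Set F} (hBb : Bornology.IsBounded B) (hB0 : B ∈ 𝓝 (0 : F)) :
    ∃ R : ℝ, 0 < R ∧ ∀ x, ‖x‖ ≤ R * gauge B x := by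
  obtain ⟨R, hR, hBR⟩ := hBb.subset_closedBall_lt 0 0
  refine ⟨R, hR, fun x => ?_⟩
  have := le_gauge_of_subset_closedBall (x := x) (absorbent_nhds_zero hB0) hR.le hBR
  rw [div_le_iff₀ hR] at this
  linarith

theorem exists_inner_eq_gauge {E : Type*} [NormedAddCommGroup E] [InnerProductSpace ℝ E]
    [FiniteDimensional ℝ E] {B : Set E} (hBconv : Convex ℝ B) (hB0 : B ∈ 𝓝 (0 : E))
    {x : E} (hx : x ≠ 0) :
    ∃ p : E, ⟪p, x⟫ = gauge B x ∧ ∀ y, ⟪p, y⟫ ≤ gauge B y := by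
  obtain ⟨g, hgx, hg⟩ := exists_extension_of_le_sublinear
    (LinearPMap.mkSpanSingleton x (gauge B x) hx) (gauge B)
    (fun r hr y => gauge_smul_of_nonneg hr.le y) (gauge_add_le hBconv (absorbent_nhds_zero hB0))
    (by
      rintro ⟨y, hy⟩
      obtain ⟨r, rfl⟩ := Submodule.mem_span_singleton.1 hy
      rw [LinearPMap.mkSpanSingleton'_apply, smul_eq_mul]
      rcases le_or_gt r 0 with hr | hr
      · exact (mul_nonpos_of_nonpos_of_nonneg hr (gauge_nonneg x)).trans (gauge_nonneg _)
      · rw [gauge_smul_of_nonneg hr.le, smul_eq_mul]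
        exact le_rfl)
  refine ⟨(InnerProductSpace.toDual ℝ E).symm (LinearMap.toContinuousLinearMap g), ?_,
    fun y => by simpa using hg y⟩
  simpa using (hgx ⟨x, Submodule.mem_span_singleton_self x⟩).trans
    (LinearPMap.mkSpanSingleton'_apply_self _ _ _ _)

theorem csInf_mem_of_continuousWithinAt_Ioi {g : ℝ → ℝ} {a b c : ℝ}
    (hg : ∀ v ∈ Icc a b, ContinuousWithinAt g (Ioi v) v)
    (hne : {v ∈ Icc a b | c ≤ g v}.Nonempty) :
    sInf {v ∈ Icc a b | c ≤ g v} ∈ {v ∈ Icc a b | c ≤ g v} := by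
  set S := {v ∈ Icc a b | c ≤ g v}
  have hbdd : BddBelow S := ⟨a, fun v hv => hv.1.1⟩
  have hcl : sInf S ∈ closure S := csInf_mem_closure hne hbdd
  have hmem : sInf S ∈ Icc a b := isClosed_Icc.closure_subset_iff.2 (fun v hv => hv.1) hcl
  have hlim : Tendsto g (𝓝[S] sInf S) (𝓝 (g (sInf S))) :=
    (continuousWithinAt_Ioi_iff_Ici.1 (hg _ hmem)).mono fun v hv => csInf_le hbdd hv
  have := mem_closure_iff_nhdsWithin_neBot.1 hcl
  exact ⟨hmem, ge_of_tendsto hlim (eventually_mem_nhdsWithin.mono fun v hv => hv.2)⟩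

theorem UniformCauchySeqOn.tendstoUniformlyOn_limUnder {ι α β : Type*} [Nonempty ι]
    [SemilatticeSup ι] [UniformSpace β] [CompleteSpace β] [Nonempty β] {F : ι → α → β}
    {s : Set α} (h : UniformCauchySeqOn F atTop s) :
    TendstoUniformlyOn F (fun x => limUnder atTop (F · x)) atTop s :=
  h.tendstoUniformlyOn_of_tendsto fun _ hx => (h.cauchySeq hx).tendsto_limUnder

theorem TendstoUniformlyOnFilter.exists_tendsto {α β : Type*} [MetricSpace β] [CompleteSpace β]
    {F : ℕ → α → β} {f : α → β} {l : Filter α} [l.NeBot]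
    (hFf : TendstoUniformlyOnFilter F f atTop l) (hF : ∀ k, ∃ L, Tendsto (F k) l (𝓝 L)) :
    ∃ L, Tendsto f l (𝓝 L) := by
  choose L hL using hF
  have hLc : CauchySeq L := by
    refine Metric.cauchySeq_iff.2 fun ε hε => ?_
    obtain ⟨K, hK⟩ := eventually_atTop.1
      (Metric.tendstoUniformlyOnFilter_iff.1 hFf (ε / 3) (by positivity)).curry
    refine ⟨K, fun m hm k hk => ?_⟩
    have hmk : ∀ᶠ x in l, dist (F m x) (F k x) ≤ 2 * ε / 3 := by
      filter_upwards [hK m hm, hK k hk] with x hxm hxk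
      linarith [dist_triangle_left (F m x) (F k x) (f x)]
    linarith [le_of_tendsto ((hL m).dist (hL k)) hmk]
  obtain ⟨L₀, hL₀⟩ := cauchySeq_tendsto_of_complete hLc
  exact ⟨L₀, hFf.tendsto_of_eventually_tendsto (Eventually.of_forall hL) hL₀⟩

section Skorokhod

variable {J N : ℕ} {n d : Fin N → EucSp J} {c : Fin N → ℝ}

-- The condition that Assumption (B) imposes on the pair `(δ, B)`.
def InwardNormalsOrthogonal (n d : Fin N → EucSp J) (δ : ℝ) (B : Set (EucSp J)) : Prop :=
  ∀ i : Fin N, ∀ z ∈ frontier B, |⟪z, n i⟫| < δ →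
    ∀ ν : EucSp J, ‖ν‖ = 1 → (∀ y ∈ B, 0 ≤ ⟪ν, y - z⟫) → ⟪ν, d i⟫ = 0

namespace InwardNormalsOrthogonal

variable {δ : ℝ} {B : Set (EucSp J)}

theorem inner_eq_zero (h : InwardNormalsOrthogonal n d δ B) {i : Fin N} {z q : EucSp J}
    (hz : z ∈ frontier B) (hzi : |⟪z, n i⟫| < δ) (hq : ∀ y ∈ B, 0 ≤ ⟪q, y - z⟫) :
    ⟪q, d i⟫ = 0 := by
  rcases eq_or_ne q 0 with rfl | hq0
  · simp
  have hq' : 0 < ‖q‖ := norm_pos_iff.2 hq0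
  have := h i z hz hzi (‖q‖⁻¹ • q)
    (by rw [norm_smul, norm_inv, norm_norm, inv_mul_cancel₀ hq'.ne'])
    (fun y hy => by rw [real_inner_smul_left]; exact mul_nonneg (by positivity) (hq y hy))
  rw [real_inner_smul_left] at this
  exact (mul_eq_zero.1 this).resolve_left (inv_ne_zero hq'.ne')

theorem exists_supportFunctional (h : InwardNormalsOrthogonal n d δ B) (hBconv : Convex ℝ B)
    (hB0 : B ∈ 𝓝 0) {x : EucSp J} (hx : 0 < gauge B x) :
    ∃ p : EucSp J, ⟪p, x⟫ = gauge B x ∧ (∀ y, ⟪p, y⟫ ≤ gauge B y) ∧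
      ∀ i, |⟪x, n i⟫| < δ * gauge B x → ⟪p, d i⟫ = 0 := by
  have hx0 : x ≠ 0 := by rintro rfl; simp at hx
  obtain ⟨p, hpx, hp⟩ := exists_inner_eq_gauge hBconv hB0 hx0
  set z := (gauge B x)⁻¹ • x
  have hpz : ⟪p, z⟫ = 1 := by rw [real_inner_smul_right, hpx, inv_mul_cancel₀ hx.ne']
  have hz : z ∈ frontier B := (gauge_eq_one_iff_mem_frontier hBconv hB0).1 <| by
    rw [gauge_smul_of_nonneg (inv_nonneg.2 hx.le), smul_eq_mul, inv_mul_cancel₀ hx.ne']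
  refine ⟨p, hpx, hp, fun i hi => ?_⟩
  have hzi : |⟪z, n i⟫| < δ := by
    rwa [real_inner_smul_left, abs_mul, abs_inv, abs_of_pos hx, inv_mul_lt_iff₀ hx, mul_comm]
  -- `-p` is an inward normal at `z`: on `B`, `⟪p, y⟫ ≤ gauge B y ≤ 1 = ⟪p, z⟫`
  have := h.inner_eq_zero hz hzi (q := -p) fun y hy => by
    rw [inner_neg_left, inner_sub_right, hpz]
    linarith [hp y, gauge_le_one_of_mem hy]
  simpa using this

end InwardNormalsOrthogonal

theorem eventually_ISet_subset (n : Fin N → EucSp J) (c : Fin N → ℝ) (x : EucSp J) :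
    ∀ᶠ y in 𝓝 x, ISet n c y ⊆ ISet n c x := by
  have : ∀ i, ∀ᶠ y in 𝓝 x, i ∈ ISet n c y → i ∈ ISet n c x := by
    intro i
    by_cases hi : i ∈ ISet n c x
    · exact Eventually.of_forall fun _ _ => hi
    · have hcont : Continuous fun y : EucSp J => ⟪y, n i⟫ := continuous_id.inner continuous_const
      exact (hcont.continuousAt.eventually_ne hi).mono fun _ hy hy' => absurd hy' hy
  exact (eventually_all.2 this).mono fun _ hy i => hy i

theorem exists_Ioc_ISet_subset {Z : ℝ → EucSp J} {u : ℝ} (hZ : ContinuousAt Z u) (hu : 0 < u) :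
    ∃ s ∈ Ioo 0 u, ∀ v ∈ Ioc s u, ISet n c (Z v) ⊆ ISet n c (Z u) := by
  obtain ⟨l, hlu, hl⟩ := exists_Ioc_subset_of_mem_nhds
    ((hZ.eventually (eventually_ISet_subset n c (Z u))).and (Ioi_mem_nhds hu)) ⟨0, hu⟩
  refine ⟨(l + u) / 2, ⟨(hl ⟨by linarith, by linarith⟩).2, by linarith⟩, fun v hv => ?_⟩
  exact (hl ⟨by linarith [hv.1], hv.2⟩).1

theorem dCone_subset_ker {x p : EucSp J} (hp : ∀ i ∈ ISet n c x, ⟪p, d i⟫ = 0) :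
    dCone n c d x ⊆ LinearMap.ker (innerₛₗ ℝ p) := by
  rintro _ ⟨k, r, v, -, hv, rfl⟩
  refine Submodule.sum_mem _ fun j _ => Submodule.smul_mem _ _ ?_
  obtain ⟨i, hi, hvi⟩ := hv j
  simp [← hvi, hp i hi]

theorem isClosed_Hset (n : Fin N → EucSp J) (c : Fin N → ℝ) (x : EucSp J) :
    IsClosed (Hset n c x) := by
  simp only [Hset, ofPred_forall]
  exact isClosed_iInter fun i => isClosed_iInter fun _ =>
    isClosed_eq (continuous_id.inner continuous_const) continuous_const

theorem DrOn.sub {f g : ℝ → EucSp J} {T : ℝ≥0∞} (hf : DrOn f T) (hg : DrOn g T) :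
    DrOn (fun x => f x - g x) T := by
  refine ⟨fun t ht hT => (hf.1 t ht hT).sub (hg.1 t ht hT), fun t ht hT => ?_⟩
  obtain ⟨L₁, h₁⟩ := hf.2 t ht hT
  obtain ⟨L₂, h₂⟩ := hg.2 t ht hT
  exact ⟨L₁ - L₂, h₁.sub h₂⟩

theorem DrOn.of_tendstoUniformlyOn {F : ℕ → ℝ → EucSp J} {f : ℝ → EucSp J} {T : ℝ≥0∞}
    (hF : ∀ k, DrOn (F k) T)
    (hFf : ∀ t : ℝ, 0 ≤ t → ENNReal.ofReal t < T → TendstoUniformlyOn F f atTop (Icc 0 t)) :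
    DrOn f T := by
  refine ⟨fun t ht0 htT => ?_, fun t ht0 htT => ?_⟩
  · obtain ⟨t', ht'0, htt', ht'T⟩ := ENNReal.lt_iff_exists_real_btwn.1 htT
    have hlt : t < t' := (ENNReal.ofReal_lt_ofReal_iff'.1 htt').1
    have hnhds : 𝓝[>] t ≤ 𝓟 (Icc 0 t') := le_principal_iff.2 <|
      mem_of_superset (Ioo_mem_nhdsGT hlt) (Ioo_subset_Icc_self.trans (Icc_subset_Icc_left ht0))
    have hunif := hFf t' ht'0 ht'T
    exact (hunif.tendstoUniformlyOnFilter.mono_right hnhds).tendsto_of_eventually_tendsto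
      (Eventually.of_forall fun k => (hF k).1 t ht0 htT) (hunif.tendsto_at ⟨ht0, hlt.le⟩)
  · have hnhds : 𝓝[<] t ≤ 𝓟 (Icc 0 t) :=
      le_principal_iff.2 (mem_of_superset (Ioo_mem_nhdsLT ht0) Ioo_subset_Icc_self)
    exact ((hFf t ht0.le htT).tendstoUniformlyOnFilter.mono_right hnhds).exists_tendsto
      fun k => (hF k).2 t ht0 htT

namespace SolvesDPOn

variable {Z ψ φ η : ℝ → EucSp J} {T : ℝ≥0∞}

theorem sub {ψ' φ' η' : ℝ → EucSp J} (h : SolvesDPOn n c d Z ψ φ η T)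
    (h' : SolvesDPOn n c d Z ψ' φ' η' T) :
    SolvesDPOn n c d Z (fun x => ψ x - ψ' x) (fun x => φ x - φ' x) (fun x => η x - η' x) T := by
  obtain ⟨hφ, hη, hη0, hφψ, hinc⟩ := h
  obtain ⟨hφ', hη', hη0', hφψ', hinc'⟩ := h'
  refine ⟨hφ.sub hφ', hη.sub hη', Submodule.sub_mem _ hη0 hη0', fun t ht hT => ?_,
    fun s t hs hst hT => ?_⟩
  · obtain ⟨e, hH⟩ := hφψ t ht hT
    obtain ⟨e', hH'⟩ := hφψ' t ht hT
    refine ⟨by simp only [e, e']; abel, fun i hi => ?_⟩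
    simp only [inner_sub_left, hH i hi, hH' i hi, sub_zero]
  · convert Submodule.sub_mem _ (hinc s t hs hst hT) (hinc' s t hs hst hT) using 1
    dsimp only
    abel

theorem inner_eta_eq_neg (h : SolvesDPOn n c d Z ψ φ η T) {t : ℝ} (ht : 0 ≤ t)
    (hT : ENNReal.ofReal t < T) {i : Fin N} (hi : i ∈ ISet n c (Z t)) :
    ⟪η t, n i⟫ = -⟪ψ t, n i⟫ := by
  obtain ⟨e, hH⟩ := h.2.2.2.1 t ht hT
  have := hH i hi
  rw [e, inner_add_left] at this
  linarith

theorem inner_eta_zero_eq_zero (h : SolvesDPOn n c d Z ψ φ η T) {p : EucSp J}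
    (hp : ∀ i ∈ ISet n c (Z 0), ⟪p, d i⟫ = 0) : ⟪p, η 0⟫ = 0 := by
  simpa using Submodule.span_le.2 (dCone_subset_ker hp) h.2.2.1

theorem inner_eta_sub_eq_zero (h : SolvesDPOn n c d Z ψ φ η T) {s t : ℝ} (hs : 0 ≤ s)
    (hst : s < t) (hT : ENNReal.ofReal t < T) {p : EucSp J}
    (hp : ∀ v ∈ Ioc s t, ∀ i ∈ ISet n c (Z v), ⟪p, d i⟫ = 0) : ⟪p, η t - η s⟫ = 0 := by
  simpa using Submodule.span_le.2 (iUnion₂_subset fun v hv => dCone_subset_ker (hp v hv))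
    (h.2.2.2.2 s t hs hst hT)

variable {δ : ℝ} {B : Set (EucSp J)}

theorem exists_supportFunctional_active (h : SolvesDPOn n c d Z ψ φ η T)
    (hn : ∀ i, ‖n i‖ = 1) (hB : InwardNormalsOrthogonal n d δ B) (hδ : 0 < δ)
    (hBconv : Convex ℝ B) (hB0 : B ∈ 𝓝 0) {v M : ℝ} (hv : 0 ≤ v) (hT : ENNReal.ofReal v < T)
    (hψ : ‖ψ v‖ ≤ M) (hgauge : M / δ < gauge B (η v)) :
    ∃ p : EucSp J, ⟪p, η v⟫ = gauge B (η v) ∧ (∀ y, ⟪p, y⟫ ≤ gauge B y) ∧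
      ∀ i ∈ ISet n c (Z v), ⟪p, d i⟫ = 0 := by
  obtain ⟨p, hpη, hp, hpd⟩ := hB.exists_supportFunctional hBconv hB0
    ((div_nonneg ((norm_nonneg _).trans hψ) hδ.le).trans_lt hgauge)
  refine ⟨p, hpη, hp, fun i hi => hpd i ?_⟩
  calc |⟪η v, n i⟫| = |⟪ψ v, n i⟫| := by rw [h.inner_eta_eq_neg hv hT hi, abs_neg]
    _ ≤ ‖ψ v‖ := by simpa [hn i] using abs_real_inner_le_norm (ψ v) (n i)
    _ ≤ M := hψ
    _ < δ * gauge B (η v) := by rwa [div_lt_iff₀' hδ] at hgauge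

theorem gauge_eta_le (h : SolvesDPOn n c d Z ψ φ η T) (hn : ∀ i, ‖n i‖ = 1)
    (hZ : ContinuousOn Z (Ici 0)) (hB : InwardNormalsOrthogonal n d δ B) (hδ : 0 < δ)
    (hBconv : Convex ℝ B) (hB0 : B ∈ 𝓝 0) {t M : ℝ} (hT : ENNReal.ofReal t < T)
    (hM : ∀ v ∈ Icc 0 t, ‖ψ v‖ ≤ M) {u : ℝ} (hu : u ∈ Icc 0 t) :
    gauge B (η u) ≤ M / δ := by
  by_contra! hlt
  have hvT : ∀ v ∈ Icc 0 t, ENNReal.ofReal v < T :=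
    fun v hv => (ENNReal.ofReal_le_ofReal hv.2).trans_lt hT
  set S := {v ∈ Icc 0 t | gauge B (η u) ≤ gauge B (η v)}
  have hS : sInf S ∈ S := csInf_mem_of_continuousWithinAt_Ioi
    (fun v hv => (continuous_gauge hBconv hB0).continuousAt.comp_continuousWithinAt
      (h.2.1.1 v hv.1 (hvT v hv))) ⟨u, hu, le_rfl⟩
  set u₀ := sInf S
  obtain ⟨hu₀, hgauge⟩ := hS
  obtain ⟨p, hpη, hp, hpd⟩ := h.exists_supportFunctional_active hn hB hδ hBconv hB0 hu₀.1
    (hvT u₀ hu₀) (hM u₀ hu₀) (hlt.trans_le hgauge)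
  rcases hu₀.1.eq_or_lt with h0 | hpos
  · have hM0 : 0 ≤ M / δ :=
      div_nonneg ((norm_nonneg _).trans (hM 0 ⟨le_rfl, hu.1.trans hu.2⟩)) hδ.le
    rw [← h0] at hpη hpd hgauge
    linarith [h.inner_eta_zero_eq_zero hpd]
  · obtain ⟨s, ⟨hs0, hsu⟩, hact⟩ :=
      exists_Ioc_ISet_subset (n := n) (c := c) (hZ.continuousAt (Ici_mem_nhds hpos)) hpos
    have hinc := h.inner_eta_sub_eq_zero hs0.le hsu (hvT u₀ hu₀)
      fun v hv i hi => hpd i (hact v hv hi)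
    rw [inner_sub_right] at hinc
    have hs : s ∈ S := ⟨⟨hs0.le, hsu.le.trans hu₀.2⟩, by linarith [hp (η s)]⟩
    exact (csInf_le ⟨0, fun v hv => hv.1.1⟩ hs).not_gt hsu

theorem of_tendsto {ψk φk ηk : ℕ → ℝ → EucSp J}
    (hDP : ∀ k, SolvesDPOn n c d Z (ψk k) (φk k) (ηk k) T) (hT : 0 < T)
    (hφ : DrOn φ T) (hη : DrOn η T)
    (hψlim : ∀ t, 0 ≤ t → ENNReal.ofReal t < T → Tendsto (fun k => ψk k t) atTop (𝓝 (ψ t)))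
    (hφlim : ∀ t, 0 ≤ t → ENNReal.ofReal t < T → Tendsto (fun k => φk k t) atTop (𝓝 (φ t)))
    (hηlim : ∀ t, 0 ≤ t → ENNReal.ofReal t < T → Tendsto (fun k => ηk k t) atTop (𝓝 (η t))) :
    SolvesDPOn n c d Z ψ φ η T := by
  refine ⟨hφ, hη, ?_, fun t h0 ht => ⟨?_, ?_⟩, fun s t hs hst ht => ?_⟩
  · exact (Submodule.closed_of_finiteDimensional _).mem_of_tendsto
      (hηlim 0 le_rfl (by simpa using hT)) (Eventually.of_forall fun k => (hDP k).2.2.1)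
  · exact tendsto_nhds_unique (hφlim t h0 ht) (((hψlim t h0 ht).add (hηlim t h0 ht)).congr
      fun k => ((hDP k).2.2.2.1 t h0 ht).1.symm)
  · exact (isClosed_Hset n c (Z t)).mem_of_tendsto (hφlim t h0 ht)
      (Eventually.of_forall fun k => ((hDP k).2.2.2.1 t h0 ht).2)
  · have hs' : ENNReal.ofReal s < T := (ENNReal.ofReal_le_ofReal hst.le).trans_lt ht
    exact (Submodule.closed_of_finiteDimensional _).mem_of_tendsto
      ((hηlim t (hs.trans hst.le) ht).sub (hηlim s hs hs'))
      (Eventually.of_forall fun k => (hDP k).2.2.2.2 s t hs hst ht)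

end SolvesDPOn

theorem exists_norm_eta_le (hn : ∀ i, ‖n i‖ = 1) (hB : AssumptionB n d) :
    ∃ C : ℝ, 0 < C ∧ ∀ {Z ψ φ η : ℝ → EucSp J} {T : ℝ≥0∞} {t M : ℝ},
      ContinuousOn Z (Ici 0) → SolvesDPOn n c d Z ψ φ η T → ENNReal.ofReal t < T →
      (∀ v ∈ Icc 0 t, ‖ψ v‖ ≤ M) → ∀ u ∈ Icc 0 t, ‖η u‖ ≤ C * M := by
  obtain ⟨δ, hδ, B, hBc, hBconv, -, hB0, hBn⟩ := hB
  rw [mem_interior_iff_mem_nhds] at hB0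
  obtain ⟨R, hR, hRB⟩ := exists_norm_le_mul_gauge hBc.isBounded hB0
  refine ⟨R / δ, by positivity, fun {Z ψ φ η T t M} hZ h hT hM u hu => ?_⟩
  calc ‖η u‖ ≤ R * gauge B (η u) := hRB _
    _ ≤ R * (M / δ) :=
      mul_le_mul_of_nonneg_left (h.gauge_eta_le hn hZ hBn hδ hBconv hB0 hT hM hu) hR.le
    _ = R / δ * M := by ring

theorem uniformCauchySeqOn_eta (hn : ∀ i, ‖n i‖ = 1) (hB : AssumptionB n d)
    {Z : ℝ → EucSp J} (hZ : ContinuousOn Z (Ici 0)) {T : ℝ≥0∞} {ψk φk ηk : ℕ → ℝ → EucSp J}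
    (hDP : ∀ k, SolvesDPOn n c d Z (ψk k) (φk k) (ηk k) T) {t : ℝ} (hT : ENNReal.ofReal t < T)
    (hψ : UniformCauchySeqOn ψk atTop (Icc 0 t)) : UniformCauchySeqOn ηk atTop (Icc 0 t) := by
  obtain ⟨C, hC, hbound⟩ := exists_norm_eta_le (c := c) hn hB
  rw [Metric.uniformCauchySeqOn_iff] at hψ ⊢
  intro ε hε
  obtain ⟨K, hK⟩ := hψ (ε / (2 * C)) (by positivity)
  refine ⟨K, fun m hm k hk u hu => ?_⟩
  have hψmk : ∀ v ∈ Icc 0 t, ‖ψk m v - ψk k v‖ ≤ ε / (2 * C) :=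
    fun v hv => by simpa [dist_eq_norm] using (hK m hm k hk v hv).le
  calc dist (ηk m u) (ηk k u) ≤ C * (ε / (2 * C)) := by
        rw [dist_eq_norm]; exact hbound hZ ((hDP m).sub (hDP k)) hT hψmk u hu
    _ = ε / 2 := by field_simp
    _ < ε := half_lt_self hε

end Skorokhod

theorem statement10_general (J N : ℕ)
    (n d : Fin N → EucSp J) (c : Fin N → ℝ)
    (hn : ∀ i, ‖n i‖ = 1)
    (hB : AssumptionB n d)
    (X Z Y : ℝ → EucSp J)
    (hZY : SolvesESP n c d X Z Y)
    (ψk : ℕ → (ℝ → EucSp J)) (ψ : ℝ → EucSp J)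
    (hconv : ∀ T' : ℝ, 0 ≤ T' → TendstoUniformlyOn (fun k => ψk k) ψ atTop (Icc 0 T'))
    (T : ℝ) (hT : 0 < T)
    (φk ηk : ℕ → (ℝ → EucSp J))
    (hDP : ∀ k, SolvesDPOn n c d Z (ψk k) (φk k) (ηk k) (ENNReal.ofReal T)) :
    ∃ φ η : ℝ → EucSp J,
      (∀ T' : ℝ, 0 ≤ T' → T' < T →
        TendstoUniformlyOn (fun k => φk k) φ atTop (Icc 0 T') ∧
        TendstoUniformlyOn (fun k => ηk k) η atTop (Icc 0 T')) ∧
      SolvesDPOn n c d Z ψ φ η (ENNReal.ofReal T) := by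
  have hlt : ∀ {t : ℝ}, ENNReal.ofReal t < ENNReal.ofReal T ↔ t < T :=
    ENNReal.ofReal_lt_ofReal_iff hT
  set η : ℝ → EucSp J := fun t => limUnder atTop fun k => ηk k t
  have hη : ∀ t, 0 ≤ t → t < T → TendstoUniformlyOn ηk η atTop (Icc 0 t) := fun t h0 ht =>
    (uniformCauchySeqOn_eta hn hB hZY.1 hDP (hlt.2 ht)
      (hconv t h0).uniformCauchySeqOn).tendstoUniformlyOn_limUnder
  have hφ : ∀ t, 0 ≤ t → t < T → TendstoUniformlyOn φk (ψ + η) atTop (Icc 0 t) :=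
    fun t h0 ht => ((hconv t h0).add (hη t h0 ht)).congr <| Eventually.of_forall fun k v hv =>
      ((hDP k).2.2.2.1 v hv.1 (hlt.2 (hv.2.trans_lt ht))).1.symm
  refine ⟨ψ + η, η, fun t h0 ht => ⟨hφ t h0 ht, hη t h0 ht⟩, ?_⟩
  exact SolvesDPOn.of_tendsto hDP (ENNReal.ofReal_pos.2 hT)
    (DrOn.of_tendstoUniformlyOn (fun k => (hDP k).1) fun t h0 ht => hφ t h0 (hlt.1 ht))
    (DrOn.of_tendstoUniformlyOn (fun k => (hDP k).2.1) fun t h0 ht => hη t h0 (hlt.1 ht))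
    (fun t h0 _ => (hconv t h0).tendsto_at ⟨h0, le_rfl⟩)
    (fun t h0 ht => (hφ t h0 (hlt.1 ht)).tendsto_at ⟨h0, le_rfl⟩)
    (fun t h0 ht => (hη t h0 (hlt.1 ht)).tendsto_at ⟨h0, le_rfl⟩)

/-- **Lemma (closure property of the derivative map).**
Under Assumption (B), if `ψ_k → ψ` uniformly on compacts and `(φ_k, η_k)` solves the DP
associated with `Z` for `ψ_k` on `[0,T)` for each `k`, then there is a pair `(φ,η)` of
right-continuous functions with finite left limits on `[0,T)` such that `(φ_k,η_k) → (φ,η)`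
uniformly on compact subintervals of `[0,T)` and `(φ,η)` solves the DP for `ψ` on `[0,T)`. -/
theorem statement10 (J N : ℕ) (hJ : 1 ≤ J) (hN : 1 ≤ N)
    (n d : Fin N → EucSp J) (c : Fin N → ℝ)
    (hn : ∀ i, ‖n i‖ = 1) (hdn : ∀ i, ⟪d i, n i⟫ = 1)
    (hGne : (Gset n c).Nonempty)
    (hB : AssumptionB n d)
    (X Z Y : ℝ → EucSp J) (hX : ContinuousOn X (Ici 0)) (hX0 : X 0 ∈ Gset n c)
    (hZY : SolvesESP n c d X Z Y)
    (ψk : ℕ → (ℝ → EucSp J)) (ψ : ℝ → EucSp J)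
    (hψkDr : ∀ k, DrOn (ψk k) ⊤) (hψDr : DrOn ψ ⊤)
    (hconv : ∀ T' : ℝ, 0 ≤ T' → TendstoUniformlyOn (fun k => ψk k) ψ atTop (Icc 0 T'))
    (T : ℝ) (hT : 0 < T)
    (φk ηk : ℕ → (ℝ → EucSp J))
    (hDP : ∀ k, SolvesDPOn n c d Z (ψk k) (φk k) (ηk k) (ENNReal.ofReal T)) :
    ∃ φ η : ℝ → EucSp J,
      (∀ T' : ℝ, 0 ≤ T' → T' < T →
        TendstoUniformlyOn (fun k => φk k) φ atTop (Icc 0 T') ∧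
        TendstoUniformlyOn (fun k => ηk k) η atTop (Icc 0 T')) ∧
      SolvesDPOn n c d Z ψ φ η (ENNReal.ofReal T) :=
  statement10_general J N n d c hn hB X Z Y hZY ψk ψ hconv T hT φk ηk hDP
end
end

section
/- Suppose the ESP data satisfies Assumption (B). Then for each x ∈ ∂G, H_x ∩ span(d(x)) = {0}. Moreover, if x ∈ ∂G ∖ W*, then every y ∈ ℝ^J can be written uniquely as y = v + w with v ∈ H_x and w ∈ span(d(x)). -/
open scoped RealInnerProductSpace ENNReal NNReal
open Filter Topology Set MeasureTheory

noncomputable section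

/-!
If `w ≠ 0` lies in `H_x ∩ span d(x)`, the line `ℝ w` leaves `B` through a boundary point `z = t w`.
As `w ∈ H_x`, `⟪z, n i⟫ = 0` for every active face `i`, so by (B) an inward normal `ν` to `B` at `z`
is orthogonal to `d i` for all `i ∈ I(x)`, hence to `w` and to `z`. But `0 ∈ int B` lies strictly on
the inner side of the supporting hyperplane at `z`, i.e. `⟪ν, z⟫ < 0`.

Off `W*` the subspaces `H_x` and `span d(x)` also span `ℝ^J`: at a point with `|I(x)| ≥ 2` this is the
definition of `W*`, and at a point with `I(x) ⊆ {i}` one has `y = (y - ⟪y, n i⟫ • d i) + ⟪y, n i⟫ • d i`.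
Hence they are complementary and the decomposition is unique.
-/

section InnerProductSpace

variable {E : Type*} [NormedAddCommGroup E] [InnerProductSpace ℝ E]

theorem exists_smul_mem_frontier_of_isBounded {B : Set E} (hB : Bornology.IsBounded B)
    (h0 : (0 : E) ∈ B) {w : E} (hw : w ≠ 0) : ∃ t : ℝ, t • w ∈ frontier B := by
  have hcont : Continuous fun t : ℝ => t • w := continuous_id.smul continuous_const
  obtain ⟨R, hR⟩ := isBounded_iff_forall_norm_le.mp hB
  have hw' : 0 < ‖w‖ := norm_pos_iff.mpr hw
  have hfar : ((|R| + 1) / ‖w‖) • w ∉ B := fun hmem => by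
    have h := hR _ hmem
    rw [norm_smul, Real.norm_of_nonneg (by positivity), div_mul_cancel₀ _ hw'.ne'] at h
    linarith [le_abs_self R]
  have hne : ((fun t : ℝ => t • w) ⁻¹' B).Nonempty ∧ (fun t : ℝ => t • w) ⁻¹' B ≠ univ :=
    ⟨⟨0, by simpa using h0⟩, fun h => hfar (h.ge (mem_univ _))⟩
  obtain ⟨t, ht⟩ := nonempty_frontier_iff.mpr hne
  exact ⟨t, hcont.frontier_preimage_subset B ht⟩

theorem exists_inward_normal_of_mem_frontier [CompleteSpace E] {B : Set E} (hconv : Convex ℝ B)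
    (h0 : (0 : E) ∈ interior B) {z : E} (hz : z ∈ frontier B) :
    ∃ ν : E, ‖ν‖ = 1 ∧ (∀ y ∈ B, 0 ≤ ⟪ν, y - z⟫) ∧ ⟪ν, z⟫ < 0 := by
  obtain ⟨f, hf⟩ := geometric_hahn_banach_open_point hconv.interior isOpen_interior hz.2
  have hle : ∀ y ∈ B, f y ≤ f z := by
    have hsub : closure (interior B) ⊆ {y | f y ≤ f z} :=
      closure_minimal (fun y hy => (hf y hy).le) (isClosed_le f.continuous continuous_const)
    rw [hconv.closure_interior_eq_closure_of_nonempty_interior ⟨0, h0⟩] at hsub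
    exact fun y hy => hsub (subset_closure hy)
  have hfz : 0 < f z := by simpa using hf 0 h0
  set v := (InnerProductSpace.toDual ℝ E).symm f
  have hv : ∀ y, ⟪v, y⟫ = f y := fun y => InnerProductSpace.toDual_symm_apply
  have hv0 : v ≠ 0 := fun h => by simp [← hv, h] at hfz
  have hinner : ∀ y, ⟪-(‖v‖⁻¹ • v), y⟫ = -(‖v‖⁻¹ * f y) := fun y => by
    rw [inner_neg_left, real_inner_smul_left, hv]
  have hvinv : 0 < ‖v‖⁻¹ := inv_pos.mpr (norm_pos_iff.mpr hv0)
  refine ⟨-(‖v‖⁻¹ • v), ?_, fun y hy => ?_, ?_⟩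
  · rw [norm_neg, norm_smul, norm_inv, norm_norm, inv_mul_cancel₀ (norm_ne_zero_iff.mpr hv0)]
  · rw [inner_sub_right, hinner, hinner]
    nlinarith [hle y hy]
  · rw [hinner]
    nlinarith

end InnerProductSpace

variable {J N : ℕ}

theorem span_coneGen_le (s : Set (EucSp J)) :
    Submodule.span ℝ (coneGen s) ≤ Submodule.span ℝ s := by
  refine Submodule.span_le.mpr ?_
  rintro _ ⟨k, r, v, -, hv, rfl⟩
  exact Submodule.sum_mem _ fun i _ => Submodule.smul_mem _ _ (Submodule.subset_span (hv i))

theorem inner_eq_zero_of_mem_span_dCone {n d : Fin N → EucSp J} {c : Fin N → ℝ} {x ν w : EucSp J}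
    (hν : ∀ i ∈ ISet n c x, ⟪ν, d i⟫ = 0) (hw : w ∈ Submodule.span ℝ (dCone n c d x)) :
    ⟪ν, w⟫ = 0 := by
  have hle : Submodule.span ℝ (dCone n c d x) ≤ (ℝ ∙ ν)ᗮ := by
    refine (span_coneGen_le _).trans (Submodule.span_le.mpr ?_)
    rintro _ ⟨i, hi, rfl⟩
    exact Submodule.mem_orthogonal_singleton_iff_inner_right.mpr (hν i hi)
  exact Submodule.mem_orthogonal_singleton_iff_inner_right.mp (hle hw)

def Hsubmodule (n : Fin N → EucSp J) (c : Fin N → ℝ) (x : EucSp J) :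
    Submodule ℝ (EucSp J) where
  carrier := Hset n c x
  add_mem' ha hb i hi := by rw [inner_add_left, ha i hi, hb i hi, add_zero]
  zero_mem' _ _ := inner_zero_left _
  smul_mem' r _ ha i hi := by rw [real_inner_smul_left, ha i hi, mul_zero]

theorem disjoint_Hsubmodule_span_dCone {n d : Fin N → EucSp J} (c : Fin N → ℝ)
    (hB : AssumptionB n d) (x : EucSp J) :
    Disjoint (Hsubmodule n c x) (Submodule.span ℝ (dCone n c d x)) := by
  obtain ⟨δ, hδ, B, hBc, hBconv, -, hB0, hBnormal⟩ := hB
  refine Submodule.disjoint_def.mpr fun w hwH hwD => ?_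
  by_contra hw
  obtain ⟨t, hz⟩ :=
    exists_smul_mem_frontier_of_isBounded hBc.isBounded (interior_subset hB0) hw
  obtain ⟨ν, hν1, hνB, hνz⟩ := exists_inward_normal_of_mem_frontier hBconv hB0 hz
  have hνd : ∀ i ∈ ISet n c x, ⟪ν, d i⟫ = 0 := fun i hi =>
    hBnormal i _ hz (by rwa [real_inner_smul_left, hwH i hi, mul_zero, abs_zero]) ν hν1 hνB
  rw [real_inner_smul_right, inner_eq_zero_of_mem_span_dCone hνd hwD, mul_zero] at hνz
  exact hνz.false

theorem Hsubmodule_sup_span_dCone_eq_top_of_subsingleton {n d : Fin N → EucSp J} {c : Fin N → ℝ}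
    (hdn : ∀ i, ⟪d i, n i⟫ = 1) {x : EucSp J} (hI : (ISet n c x).Subsingleton) :
    Hsubmodule n c x ⊔ Submodule.span ℝ (dCone n c d x) = ⊤ := by
  refine eq_top_iff.mpr fun y _ => ?_
  rcases hI.eq_empty_or_singleton with hI | ⟨a, hI⟩
  · refine Submodule.mem_sup_left fun i hi => ?_
    simp [hI] at hi
  · have hv : y - ⟪y, n a⟫ • d a ∈ Hsubmodule n c x := fun i hi => by
      rw [hI, mem_singleton_iff] at hi
      rw [hi, inner_sub_left, real_inner_smul_left, hdn, mul_one, sub_self]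
    have hda : d a ∈ dCone n c d x :=
      ⟨1, fun _ => 1, fun _ => d a, fun _ => zero_le_one, fun _ => ⟨a, hI ▸ rfl, rfl⟩, by simp⟩
    have hw : ⟪y, n a⟫ • d a ∈ Submodule.span ℝ (dCone n c d x) :=
      Submodule.smul_mem _ _ (Submodule.subset_span hda)
    simpa using Submodule.add_mem_sup hv hw

theorem Hsubmodule_sup_span_dCone_eq_top_of_notMem_Wstar {n d : Fin N → EucSp J} {c : Fin N → ℝ}
    (hdn : ∀ i, ⟪d i, n i⟫ = 1) {x : EucSp J} (hx : x ∈ frontier (Gset n c))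
    (hxW : x ∉ Wstar n c d) :
    Hsubmodule n c x ⊔ Submodule.span ℝ (dCone n c d x) = ⊤ := by
  by_cases hI : 2 ≤ (ISet n c x).ncard
  · have hspan : Submodule.span ℝ (Hset n c x ∪ dCone n c d x) = ⊤ :=
      not_not.mp fun h => hxW ⟨⟨hx, hI⟩, h⟩
    rwa [Submodule.span_union, show Hset n c x = (Hsubmodule n c x : Set (EucSp J)) from rfl,
      Submodule.span_eq] at hspan
  · exact Hsubmodule_sup_span_dCone_eq_top_of_subsingleton hdn
      (Set.ncard_le_one_iff_subsingleton.mp (by omega))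

theorem statement11_general (J N : ℕ)
    (n d : Fin N → EucSp J) (c : Fin N → ℝ)
    (hdn : ∀ i, ⟪d i, n i⟫ = 1)
    (hB : AssumptionB n d) :
    (∀ x ∈ frontier (Gset n c),
      Hset n c x ∩ (Submodule.span ℝ (dCone n c d x) : Set (EucSp J)) = {0}) ∧
    (∀ x ∈ frontier (Gset n c), x ∉ Wstar n c d → ∀ y : EucSp J,
      ∃! p : EucSp J × EucSp J,
        p.1 ∈ Hset n c x ∧ p.2 ∈ Submodule.span ℝ (dCone n c d x) ∧ y = p.1 + p.2) := by
  refine ⟨fun x _ => ?_, fun x hx hxW y => ?_⟩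
  · have h := congrArg (fun p : Submodule ℝ (EucSp J) => (p : Set (EucSp J)))
      (disjoint_iff.mp (disjoint_Hsubmodule_span_dCone c hB x))
    simp only [Submodule.coe_inf, Submodule.bot_coe] at h
    exact h
  · have hcompl : IsCompl (Hsubmodule n c x) (Submodule.span ℝ (dCone n c d x)) :=
      ⟨disjoint_Hsubmodule_span_dCone c hB x,
        codisjoint_iff.mpr (Hsubmodule_sup_span_dCone_eq_top_of_notMem_Wstar hdn hx hxW)⟩
    obtain ⟨⟨v, w⟩, hvw, huniq⟩ := Submodule.existsUnique_add_of_isCompl_prod hcompl y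
    refine ⟨(v, w), ⟨v.2, w.2, hvw.symm⟩, ?_⟩
    rintro ⟨v', w'⟩ ⟨hv', hw', rfl⟩
    have h := huniq (⟨v', hv'⟩, ⟨w', hw'⟩) rfl
    simp only [Prod.mk.injEq, Subtype.ext_iff] at h
    rw [h.1, h.2]

/-- **Lemma (decomposition at points of the boundary).**
Under Assumption (B): for each `x ∈ ∂G`, `H_x ∩ span(d(x)) = {0}`; and for `x ∈ ∂G \ W*`
every `y` decomposes uniquely as `y = v + w` with `v ∈ H_x` and `w ∈ span(d(x))`. -/
theorem statement11 (J N : ℕ) (hJ : 1 ≤ J) (hN : 1 ≤ N)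
    (n d : Fin N → EucSp J) (c : Fin N → ℝ)
    (hn : ∀ i, ‖n i‖ = 1) (hdn : ∀ i, ⟪d i, n i⟫ = 1)
    (hGne : (Gset n c).Nonempty)
    (hB : AssumptionB n d) :
    (∀ x ∈ frontier (Gset n c),
      Hset n c x ∩ (Submodule.span ℝ (dCone n c d x) : Set (EucSp J)) = {0}) ∧
    (∀ x ∈ frontier (Gset n c), x ∉ Wstar n c d → ∀ y : EucSp J,
      ∃! p : EucSp J × EucSp J,
        p.1 ∈ Hset n c x ∧ p.2 ∈ Submodule.span ℝ (dCone n c d x) ∧ y = p.1 + p.2) :=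
  statement11_general J N n d c hdn hB
end
end
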